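/- arXiv:1507.07581 — 11 statements merged into one kernel-verified Lean document; each statement's English description precedes it below -/
import Mathlib

section
/- Let (p_i, x_i), i ∈ ι, be a non-degenerate two-commodity consumer data-set. If the revealed preference digraph D_⪰ contains a directed cycle, then it contains a digon: there exist indices i ≠ j with p_i·x_j < p_i·x_i and p_j·x_i < p_j·x_j. Equivalently, every vertex-minimal directed cycle of D_⪰ is a digon. -/
/-- Dot product in `ℝ²`. -/
def dot2 (p x : Fin 2 → ℝ) : ℝ := ∑ k, p k * x k

lemma dot2_eq (p x : Fin 2 → ℝ) : dot2 p x = p 0 * x 0 + p 1 * x 1 := by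
  simp [dot2, Fin.sum_univ_two]

/-- If `p''` lies strictly between `p` and `p'` (in cross-product order) and both `p` and `p'`
rank `a` strictly below `b`, then so does `p''`. -/
lemma seg (p p' p'' a b : Fin 2 → ℝ)
    (c1 : 0 < p 0 * p'' 1 - p 1 * p'' 0)
    (c2 : 0 < p'' 0 * p' 1 - p'' 1 * p' 0)
    (c3 : 0 < p 0 * p' 1 - p 1 * p' 0)
    (h1 : dot2 p a < dot2 p b) (h2 : dot2 p' a < dot2 p' b) :
    dot2 p'' a < dot2 p'' b := by
  have key : (p 0 * p' 1 - p 1 * p' 0) * (dot2 p'' b - dot2 p'' a)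
      = (p'' 0 * p' 1 - p'' 1 * p' 0) * (dot2 p b - dot2 p a)
        + (p 0 * p'' 1 - p 1 * p'' 0) * (dot2 p' b - dot2 p' a) := by
    simp only [dot2_eq]; ring
  have hr1 : 0 < (p'' 0 * p' 1 - p'' 1 * p' 0) * (dot2 p b - dot2 p a) :=
    mul_pos c2 (by linarith)
  have hr2 : 0 < (p 0 * p'' 1 - p 1 * p'' 0) * (dot2 p' b - dot2 p' a) :=
    mul_pos c1 (by linarith)
  by_contra hcon
  push_neg at hcon
  have : (p 0 * p' 1 - p 1 * p' 0) * (dot2 p'' b - dot2 p'' a) ≤ 0 :=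
    mul_nonpos_of_nonneg_of_nonpos c3.le (by linarith)
  linarith

/-- Core geometric lemma: a "minimal cycle" configuration of length `N ≥ 3` in two
commodities is impossible. -/
lemma core (N : ℕ) (hN : 3 ≤ N) (q y : ZMod N → Fin 2 → ℝ)
    (hq : ∀ i k, 0 ≤ q i k)
    (hA : ∀ i, dot2 (q i) (y (i + 1)) < dot2 (q i) (y i))
    (hB : ∀ i j, j ≠ i → j ≠ i + 1 → dot2 (q i) (y i) < dot2 (q i) (y j)) : False := by
  haveI : NeZero N := ⟨by omega⟩
  haveI : Fact (1 < N) := ⟨by omega⟩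
  -- each price vector is nonzero
  have hS : ∀ i, 0 < q i 0 + q i 1 := by
    intro i
    rcases lt_or_eq_of_le (add_nonneg (hq i 0) (hq i 1)) with h | h
    · exact h
    · exfalso
      have h0 : q i 0 = 0 := by have := hq i 0; have := hq i 1; linarith
      have h1 : q i 1 = 0 := by have := hq i 0; have := hq i 1; linarith
      have := hA i
      rw [dot2_eq, dot2_eq, h0, h1] at this
      linarith
  set τ : ZMod N → ℝ := fun i => q i 1 / (q i 0 + q i 1) with hτ
  have hlt : ∀ i j, τ i < τ j ↔ 0 < q i 0 * q j 1 - q i 1 * q j 0 := by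
    intro i j
    simp only [hτ]
    rw [div_lt_div_iff₀ (hS i) (hS j)]
    constructor <;> intro h <;> nlinarith
  -- `y (i+1)` is the unique strict minimizer of `dot2 (q i)` among all the `y`'s
  have minstrict : ∀ i l, l ≠ i + 1 → dot2 (q i) (y (i + 1)) < dot2 (q i) (y l) := by
    intro i l hl
    by_cases hli : l = i
    · rw [hli]; exact hA i
    · exact (hA i).trans (hB i l hli hl)
  -- parallel price vectors give proportional evaluations
  have transport : ∀ i j, τ i = τ j → ∀ a b : Fin 2 → ℝ,
      dot2 (q j) a < dot2 (q j) b → dot2 (q i) a < dot2 (q i) b := by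
    intro i j hij a b h
    simp only [hτ] at hij
    have h2 : q i 1 * (q j 0 + q j 1) = q j 1 * (q i 0 + q i 1) :=
      (div_eq_div_iff (hS i).ne' (hS j).ne').1 hij
    have hc : q i 0 * q j 1 - q i 1 * q j 0 = 0 := by linarith
    have para : ∀ w : Fin 2 → ℝ,
        dot2 (q j) w * (q i 0 + q i 1) = dot2 (q i) w * (q j 0 + q j 1) := by
      intro w
      rw [dot2_eq, dot2_eq]
      linear_combination (w 1 - w 0) * hc
    have h3 : dot2 (q j) a * (q i 0 + q i 1) < dot2 (q j) b * (q i 0 + q i 1) :=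
      mul_lt_mul_of_pos_right h (hS i)
    rw [para a, para b] at h3
    exact lt_of_mul_lt_mul_right h3 (hS j).le
  -- distinct indices have non-parallel prices
  have NP : ∀ i j : ZMod N, i ≠ j → τ i ≠ τ j := by
    intro i j hij hττ
    have hne1 : i + 1 ≠ j + 1 := fun h => hij (add_right_cancel h)
    have h1 : dot2 (q i) (y (i + 1)) < dot2 (q i) (y (j + 1)) :=
      minstrict i (j + 1) hne1.symm
    have h2 : dot2 (q i) (y (j + 1)) < dot2 (q i) (y (i + 1)) :=
      transport i j hττ _ _ (minstrict j (i + 1) hne1)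
    linarith
  -- adjacency lemma: for j ∉ {i, i+1}, τ j is not strictly between τ i and τ (i+1)
  have ADJ : ∀ i j : ZMod N, j ≠ i → j ≠ i + 1 →
      ¬(τ i < τ j ∧ τ j < τ (i + 1)) ∧ ¬(τ (i + 1) < τ j ∧ τ j < τ i) := by
    intro i j hji hji1
    have e1 : j + 1 ≠ i + 1 := fun h => hji (add_right_cancel h)
    have e2 : j + 1 ≠ i + 1 + 1 := fun h => hji1 (add_right_cancel h)
    have h1 : dot2 (q i) (y (i + 1)) < dot2 (q i) (y (j + 1)) :=
      minstrict i (j + 1) e1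
    have h2 : dot2 (q (i + 1)) (y (i + 1)) < dot2 (q (i + 1)) (y (j + 1)) :=
      hB (i + 1) (j + 1) e1 e2
    have h3 : dot2 (q j) (y (j + 1)) < dot2 (q j) (y (i + 1)) :=
      minstrict j (i + 1) e1.symm
    constructor <;> rintro ⟨ha, hb⟩
    · have := seg (q i) (q (i + 1)) (q j) (y (i + 1)) (y (j + 1))
        ((hlt i j).1 ha) ((hlt j (i + 1)).1 hb) ((hlt i (i + 1)).1 (ha.trans hb)) h1 h2
      linarith
    · have := seg (q (i + 1)) (q i) (q j) (y (i + 1)) (y (j + 1))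
        ((hlt (i + 1) j).1 ha) ((hlt j i).1 hb) ((hlt (i + 1) i).1 (ha.trans hb)) h2 h1
      linarith
  -- take the maximum of τ
  obtain ⟨M, -, hM⟩ := Finset.exists_max_image (Finset.univ : Finset (ZMod N)) τ
    Finset.univ_nonempty
  have two_ne : (2 : ZMod N) ≠ 0 := by
    intro h
    have hv : ((2 : ℕ) : ZMod N).val = 2 := ZMod.val_cast_of_lt (by omega)
    rw [show ((2 : ℕ) : ZMod N) = (2 : ZMod N) by push_cast; ring, h] at hv
    simp [ZMod.val_zero] at hv
  have neMm : M - 1 ≠ M := fun h => one_ne_zero (α := ZMod N) (by linear_combination -h)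
  have neMp : M + 1 ≠ M := fun h => one_ne_zero (α := ZMod N) (by linear_combination h)
  have nePm : M - 1 ≠ M + 1 := fun h => two_ne (by linear_combination -h)
  have hMm : τ (M - 1) < τ M :=
    lt_of_le_of_ne (hM _ (Finset.mem_univ _)) (NP _ _ neMm)
  have hMp : τ (M + 1) < τ M :=
    lt_of_le_of_ne (hM _ (Finset.mem_univ _)) (NP _ _ neMp)
  have h12 : τ (M - 1) < τ (M + 1) := by
    rcases lt_or_gt_of_ne (NP _ _ nePm) with h | h
    · exact h
    · exact absurd ⟨h, hMm⟩ (ADJ M (M - 1) neMm nePm).2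
  have hfin := (ADJ (M - 1) (M + 1) nePm.symm (by rw [sub_add_cancel]; exact neMp)).1
  rw [sub_add_cancel] at hfin
  exact hfin ⟨h12, hMp⟩

/-- From a transitive-closure step, extract an explicit finite path. -/
lemma path_of_transGen {α : Type*} {R : α → α → Prop} {a b : α}
    (h : Relation.TransGen R a b) :
    ∃ n, 1 ≤ n ∧ ∃ f : ℕ → α, f 0 = a ∧ f n = b ∧ ∀ m < n, R (f m) (f (m + 1)) := by
  induction h with
  | @single c hr =>
    refine ⟨1, le_refl _, fun m => if m = 0 then a else c, ?_, ?_, ?_⟩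
    · show (if (0 : ℕ) = 0 then a else c) = a
      rw [if_pos rfl]
    · show (if (1 : ℕ) = 0 then a else c) = c
      rw [if_neg (by omega)]
    · intro m hm
      have hm0 : m = 0 := by omega
      subst hm0
      show R (if (0 : ℕ) = 0 then a else c) (if (0 + 1 : ℕ) = 0 then a else c)
      rw [if_pos rfl, if_neg (by omega)]
      exact hr
  | @tail b c hab hbc ih =>
    obtain ⟨n, hn, f, h0, hnb, hc⟩ := ih
    refine ⟨n + 1, by omega, fun m => if m ≤ n then f m else c, ?_, ?_, ?_⟩
    · show (if 0 ≤ n then f 0 else c) = a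
      rw [if_pos (Nat.zero_le n), h0]
    · show (if n + 1 ≤ n then f (n + 1) else c) = c
      rw [if_neg (by omega)]
    · intro m hm
      show R (if m ≤ n then f m else c) (if m + 1 ≤ n then f (m + 1) else c)
      by_cases hmn : m < n
      · rw [if_pos (by omega : m ≤ n), if_pos (by omega : m + 1 ≤ n)]
        exact hc m hmn
      · rw [if_pos (by omega : m ≤ n), if_neg (by omega : ¬ m + 1 ≤ n)]
        have hmeq : m = n := by omega
        rw [hmeq, hnb]
        exact hbc

/-- **Rose's theorem (digon form).** In a non-degenerate two-commodity consumer data-set,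
if the revealed preference digraph contains a directed cycle then it contains a digon:
indices `i ≠ j` with `p i · x j < p i · x i` and `p j · x i < p j · x j`. -/
theorem stmt1 {ι : Type*} [Fintype ι] (p x : ι → Fin 2 → ℝ)
    (hp : ∀ i k, 0 ≤ p i k) (hx : ∀ i k, 0 ≤ x i k)
    (hdistinct : ∀ i j, i ≠ j → x i ≠ x j)
    (hnoties : ∀ i j, i ≠ j → dot2 (p i) (x j) ≠ dot2 (p i) (x i))
    (hcycle : ∃ i, Relation.TransGen
      (fun a b => a ≠ b ∧ dot2 (p a) (x b) ≤ dot2 (p a) (x a)) i i) :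
    ∃ i j, i ≠ j ∧ dot2 (p i) (x j) < dot2 (p i) (x i) ∧
      dot2 (p j) (x i) < dot2 (p j) (x j) := by
  classical
  set R : ι → ι → Prop := fun a b => a ≠ b ∧ dot2 (p a) (x b) ≤ dot2 (p a) (x a) with hR
  have hRiff : ∀ a b, R a b ↔ (a ≠ b ∧ dot2 (p a) (x b) ≤ dot2 (p a) (x a)) := by
    rw [hR]; exact fun a b => Iff.rfl
  have hRne : ∀ a b, R a b → a ≠ b := fun a b h => ((hRiff a b).1 h).1
  have hRlt : ∀ a b, R a b → dot2 (p a) (x b) < dot2 (p a) (x a) := fun a b h =>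
    lt_of_le_of_ne ((hRiff a b).1 h).2 (hnoties a b ((hRiff a b).1 h).1)
  -- extract a cycle
  have hex : ∃ n, 1 ≤ n ∧ ∃ f : ℕ → ι, f n = f 0 ∧ ∀ m < n, R (f m) (f (m + 1)) := by
    obtain ⟨i, hi⟩ := hcycle
    obtain ⟨n, hn, f, h0, hnb, hc⟩ := path_of_transGen hi
    exact ⟨n, hn, f, by rw [h0, hnb], hc⟩
  -- take a shortest cycle
  obtain ⟨N, ⟨hN1, f, hfN, hchain⟩, hmin⟩ :
      ∃ n, (1 ≤ n ∧ ∃ f : ℕ → ι, f n = f 0 ∧ ∀ m < n, R (f m) (f (m + 1))) ∧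
        ∀ m, m < n →
          ¬(1 ≤ m ∧ ∃ f : ℕ → ι, f m = f 0 ∧ ∀ l < m, R (f l) (f (l + 1))) :=
    ⟨Nat.find hex, Nat.find_spec hex, fun m hm => Nat.find_min hex hm⟩
  have hN2 : 2 ≤ N := by
    by_contra hcon
    have hNeq : N = 1 := by omega
    have h01 := hchain 0 (by omega)
    have h10 : f 1 = f 0 := by rw [← hNeq]; exact hfN
    exact hRne _ _ h01 h10.symm
  -- vertices on the cycle are pairwise distinct
  have hD : ∀ a b, a < b → b < N → f a ≠ f b := by
    intro a b hab hbN heq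
    apply hmin (b - a) (by omega)
    refine ⟨by omega, fun m => f (a + m), ?_, ?_⟩
    · show f (a + (b - a)) = f (a + 0)
      rw [show a + (b - a) = b from by omega, show a + 0 = a from rfl]
      exact heq.symm
    · intro l hl
      show R (f (a + l)) (f (a + (l + 1)))
      rw [show a + (l + 1) = a + l + 1 from by ring]
      exact hchain (a + l) (by omega)
  -- no chords: only consecutive arcs exist among cycle vertices
  have hE : ∀ a b, a < N → b < N → b ≠ (a + 1) % N → ¬ R (f a) (f b) := by
    intro a b haN hbN hb hrab
    have hab : a ≠ b := by
      intro h
      exact hRne _ _ hrab (by rw [h])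
    rcases lt_or_gt_of_ne hab with h | h
    · -- a < b : wrap-around cycle of length N - b + a + 1 < N
      have hb2 : a + 2 ≤ b := by
        by_contra hc
        have hbeq : b = a + 1 := by omega
        exact hb (by rw [hbeq, Nat.mod_eq_of_lt (show a + 1 < N by omega)])
      apply hmin (N - b + a + 1) (by omega)
      refine ⟨by omega, fun m => if m < N - b then f (b + m)
        else if m ≤ N - b + a then f (m - (N - b)) else f b, ?_, ?_⟩
      · simp only [if_neg (show ¬(N - b + a + 1 < N - b) from by omega),
          if_neg (show ¬(N - b + a + 1 ≤ N - b + a) from by omega),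
          if_pos (show 0 < N - b from by omega)]
        rw [add_zero]
      · intro l hl
        rcases Nat.lt_or_ge (l + 1) (N - b) with h1 | h1
        · simp only [if_pos (show l < N - b from by omega), if_pos h1]
          rw [show b + (l + 1) = b + l + 1 from by ring]
          exact hchain (b + l) (by omega)
        · rcases Nat.lt_or_ge l (N - b) with h2 | h2
          · -- l + 1 = N - b : crossing the wrap
            simp only [if_pos h2, if_neg (show ¬(l + 1 < N - b) from by omega),
              if_pos (show l + 1 ≤ N - b + a from by omega)]
            rw [show l + 1 - (N - b) = 0 from by omega, show b + l = N - 1 from by omega,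
              ← hfN]
            have := hchain (N - 1) (by omega)
            rwa [show N - 1 + 1 = N from by omega] at this
          · rcases Nat.lt_or_ge l (N - b + a) with h3 | h3
            · simp only [if_neg (show ¬(l < N - b) from by omega),
                if_pos (show l ≤ N - b + a from by omega),
                if_neg (show ¬(l + 1 < N - b) from by omega),
                if_pos (show l + 1 ≤ N - b + a from by omega)]
              rw [show l + 1 - (N - b) = l - (N - b) + 1 from by omega]
              exact hchain (l - (N - b)) (by omega)
            · -- l = N - b + a : the chord
              simp only [if_neg (show ¬(l < N - b) from by omega),
                if_pos (show l ≤ N - b + a from by omega),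
                if_neg (show ¬(l + 1 < N - b) from by omega),
                if_neg (show ¬(l + 1 ≤ N - b + a) from by omega)]
              rw [show l - (N - b) = a from by omega]
              exact hrab
    · -- b < a : cycle f b, f (b+1), ..., f a, f b of length a - b + 1 < N
      have hlen : a - b + 1 < N := by
        rcases Nat.lt_or_ge (a - b + 1) N with h' | h'
        · exact h'
        · exfalso
          have ha' : a = N - 1 := by omega
          have hb' : b = 0 := by omega
          exact hb (by rw [ha', hb', show N - 1 + 1 = N from by omega, Nat.mod_self])
      apply hmin (a - b + 1) hlen
      refine ⟨by omega, fun m => if m ≤ a - b then f (b + m) else f b, ?_, ?_⟩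
      · simp only [if_neg (show ¬(a - b + 1 ≤ a - b) from by omega),
          if_pos (show 0 ≤ a - b from by omega)]
        rw [add_zero]
      · intro l hl
        rcases Nat.lt_or_ge l (a - b) with h1 | h1
        · simp only [if_pos (show l ≤ a - b from by omega),
            if_pos (show l + 1 ≤ a - b from by omega)]
          rw [show b + (l + 1) = b + l + 1 from by ring]
          exact hchain (b + l) (by omega)
        · simp only [if_pos (show l ≤ a - b from by omega),
            if_neg (show ¬(l + 1 ≤ a - b) from by omega)]
          rw [show l = a - b from by omega, show b + (a - b) = a from by omega]
          exact hrab
  rcases Nat.lt_or_ge N 3 with hN3 | hN3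
  · -- N = 2 : the cycle is itself a digon
    have hNeq : N = 2 := by omega
    have h01 : R (f 0) (f 1) := hchain 0 (by omega)
    have hf2 : f 2 = f 0 := by rw [← hNeq]; exact hfN
    have h10 : R (f 1) (f 0) := by
      rw [← hf2]
      exact hchain 1 (by omega)
    exact ⟨f 0, f 1, hRne _ _ h01, hRlt _ _ h01, hRlt _ _ h10⟩
  · -- N ≥ 3 : impossible by the core geometric lemma
    exfalso
    haveI : NeZero N := ⟨by omega⟩
    haveI : Fact (1 < N) := ⟨by omega⟩
    have hval1 : ∀ z : ZMod N, (z + 1).val = (z.val + 1) % N := by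
      intro z
      rw [ZMod.val_add, ZMod.val_one]
    have hRz : ∀ z : ZMod N, R (f z.val) (f ((z + 1).val)) := by
      intro z
      have hzlt : z.val < N := ZMod.val_lt z
      rw [hval1 z]
      rcases Nat.lt_or_ge (z.val + 1) N with h | h
      · rw [Nat.mod_eq_of_lt h]
        exact hchain z.val hzlt
      · have hzeq : z.val + 1 = N := by omega
        have hstep := hchain z.val hzlt
        rw [show z.val + 1 = N from hzeq, hfN] at hstep
        rw [hzeq, Nat.mod_self]
        exact hstep
    refine core N hN3 (fun z => p (f z.val)) (fun z => x (f z.val))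
      (fun z k => hp _ k) (fun z => ?_) (fun z w hwz hwz1 => ?_)
    · exact hRlt _ _ (hRz z)
    · have hz : z.val < N := ZMod.val_lt z
      have hw : w.val < N := ZMod.val_lt w
      have hvne : z.val ≠ w.val := fun h => hwz (ZMod.val_injective N h).symm
      have hbch : w.val ≠ (z.val + 1) % N := by
        intro h
        apply hwz1
        apply ZMod.val_injective N
        rw [hval1 z]
        exact h
      have hne : f z.val ≠ f w.val := by
        rcases lt_or_gt_of_ne hvne with h | h
        · exact hD z.val w.val h hw
        · exact (hD w.val z.val h hz).symm
      have hnR := hE z.val w.val hz hw hbch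
      have hle : ¬ dot2 (p (f z.val)) (x (f w.val)) ≤ dot2 (p (f z.val)) (x (f z.val)) :=
        fun hle => hnR ((hRiff _ _).2 ⟨hne, hle⟩)
      exact not_le.mp hle
end

section
/- Let (p_i, x_i), i ∈ ι, be a non-degenerate two-commodity consumer data-set on a finite index set, and let S ⊆ ι. Then S intersects every directed cycle of the revealed preference digraph D_⪰ (i.e. S is a directed feedback vertex set, so that D_⪰ restricted to ι∖S is acyclic) if and only if S is a vertex cover of the auxiliary undirected graph G_⪰ (i.e. every edge of G_⪰ has an endpoint in S). -/
lemma pairA (q q' X Y : Fin 2 → ℝ) (hq : 0 ≤ q 1) (hq' : 0 ≤ q' 1)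
    (h1 : dot2 q X < dot2 q Y) (h2 : dot2 q' Y < dot2 q' X) : X 0 ≠ Y 0 := by
  intro he
  simp only [dot2, Fin.sum_univ_two] at h1 h2
  have e1 : q 0 * X 0 = q 0 * Y 0 := by rw [he]
  have e2 : q' 0 * X 0 = q' 0 * Y 0 := by rw [he]
  rcases le_or_gt (Y 1) (X 1) with h | h
  · nlinarith [mul_nonneg hq (sub_nonneg.2 h)]
  · nlinarith [mul_nonneg hq' (sub_nonneg.2 h.le)]

lemma pairB (q q' A B C : Fin 2 → ℝ) (hq : 0 ≤ q 1) (hq' : 0 ≤ q' 1)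
    (α β : ℝ) (hα : 0 < α) (hβ : 0 < β)
    (hid : (α + β) * C 0 = β * A 0 + α * B 0)
    (h1 : dot2 q A < dot2 q B) (h2 : dot2 q B < dot2 q C)
    (h3 : dot2 q' C < dot2 q' A) (h4 : dot2 q' C < dot2 q' B) : False := by
  simp only [dot2, Fin.sum_univ_two] at h1 h2 h3 h4
  rcases le_or_gt (β * A 1 + α * B 1) ((α + β) * C 1) with hc | hc
  · have t1 : 0 ≤ q' 1 * ((α + β) * C 1 - (β * A 1 + α * B 1)) :=
      mul_nonneg hq' (by linarith)
    have t2 : 0 < β * ((q' 0 * A 0 + q' 1 * A 1) - (q' 0 * C 0 + q' 1 * C 1)) :=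
      mul_pos hβ (by linarith)
    have t3 : 0 < α * ((q' 0 * B 0 + q' 1 * B 1) - (q' 0 * C 0 + q' 1 * C 1)) :=
      mul_pos hα (by linarith)
    have hid' : q' 0 * ((α + β) * C 0) = q' 0 * (β * A 0 + α * B 0) := by rw [hid]
    nlinarith [t1, t2, t3, hid']
  · have t1 : 0 ≤ q 1 * ((β * A 1 + α * B 1) - (α + β) * C 1) :=
      mul_nonneg hq (by linarith)
    have t2 : 0 < β * ((q 0 * B 0 + q 1 * B 1) - (q 0 * A 0 + q 1 * A 1)) :=
      mul_pos hβ (by linarith)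
    have t3 : 0 < (α + β) * ((q 0 * C 0 + q 1 * C 1) - (q 0 * B 0 + q 1 * B 1)) :=
      mul_pos (by linarith) (by linarith)
    have hid' : q 0 * ((α + β) * C 0) = q 0 * (β * A 0 + α * B 0) := by rw [hid]
    nlinarith [t1, t2, t3, hid']

lemma exists_path {α : Type*} {r : α → α → Prop} {a b : α} (h : Relation.TransGen r a b) :
    ∃ n, ∃ c : ℕ → α, c 0 = a ∧ c (n + 1) = b ∧ ∀ m ≤ n, r (c m) (c (m + 1)) := by
  induction h with
  | @single b' h =>
    refine ⟨0, fun m => if m = 0 then a else b', by simp, by simp, ?_⟩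
    intro m hm
    interval_cases m
    simpa using h
  | @tail b' c' hab hbc ih =>
    obtain ⟨n, c, h0, h1, hs⟩ := ih
    refine ⟨n + 1, fun m => if m ≤ n + 1 then c m else c', by simp [h0], ?_, ?_⟩
    · have : ¬ (n + 1 + 1 ≤ n + 1) := by omega
      simp [this]
    · intro m hm
      rcases Nat.lt_or_ge m (n + 1) with h | h
      · have e1 : m ≤ n + 1 := by omega
        have e2 : m + 1 ≤ n + 1 := by omega
        simpa [e1, e2] using hs m (by omega)
      · have hm' : m = n + 1 := by omega
        subst hm'
        have e1 : n + 1 ≤ n + 1 := le_refl _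
        have e2 : ¬ (n + 1 + 1 ≤ n + 1) := by omega
        simpa [e1, e2, h1] using hbc


/-- For a non-degenerate two-commodity consumer data-set on a finite index set, a set
`S` of indices is a directed feedback vertex set of the revealed preference digraph
(its removal makes the digraph acyclic) if and only if `S` is a vertex cover of the
auxiliary undirected graph `G_⪰` (every digon has an endpoint in `S`). -/
theorem stmt3 {ι : Type*} [Fintype ι] (p x : ι → Fin 2 → ℝ)
    (hp : ∀ i k, 0 ≤ p i k) (hx : ∀ i k, 0 ≤ x i k)
    (hdistinct : ∀ i j, i ≠ j → x i ≠ x j)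
    (hnoties : ∀ i j, i ≠ j → dot2 (p i) (x j) ≠ dot2 (p i) (x i))
    (S : Set ι) :
    (∀ i, ¬ Relation.TransGen
        (fun a b => a ∉ S ∧ b ∉ S ∧ a ≠ b ∧ dot2 (p a) (x b) ≤ dot2 (p a) (x a)) i i) ↔
      (∀ i j, i ≠ j → dot2 (p i) (x j) ≤ dot2 (p i) (x i) →
        dot2 (p j) (x i) ≤ dot2 (p j) (x j) → i ∈ S ∨ j ∈ S) := by
  classical
  constructor
  · intro h i j hij hle1 hle2
    by_contra hS
    push_neg at hS
    exact h i (Relation.TransGen.head ⟨hS.1, hS.2, hij, hle1⟩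
      (Relation.TransGen.single ⟨hS.2, hS.1, hij.symm, hle2⟩))
  · intro H i hT
    obtain ⟨n, c, hc0, hcn, hstep⟩ := exists_path hT
    set P : ℕ → Prop := fun K => 0 < K ∧ ∃ d : ℕ → ι,
      (∀ m, d (m + K) = d m) ∧ ∀ m, (d m ∉ S ∧ d (m+1) ∉ S ∧ d m ≠ d (m+1) ∧
        dot2 (p (d m)) (x (d (m+1))) ≤ dot2 (p (d m)) (x (d m))) with hPdef
    have hPex : ∃ K, P K := by
      refine ⟨n+1, Nat.succ_pos n, fun m => c (m % (n+1)),
        fun m => by show c ((m + (n+1)) % (n+1)) = c (m % (n+1)); rw [Nat.add_mod_right], ?_⟩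
      intro m
      show c (m % (n+1)) ∉ S ∧ c ((m + 1) % (n+1)) ∉ S ∧ c (m % (n+1)) ≠ c ((m + 1) % (n+1)) ∧
        dot2 (p (c (m % (n+1)))) (x (c ((m + 1) % (n+1)))) ≤
          dot2 (p (c (m % (n+1)))) (x (c (m % (n+1))))
      set j := m % (n+1) with hjdef
      have hj : j < n + 1 := Nat.mod_lt _ (Nat.succ_pos n)
      have hj1 : (j + 1) % (n+1) = (m + 1) % (n+1) := Nat.ModEq.add_right 1 (Nat.mod_modEq m (n+1))
      have hcm1 : c ((m+1) % (n+1)) = c (j+1) := by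
        rcases Nat.lt_or_ge (j+1) (n+1) with h | h
        · rw [← hj1, Nat.mod_eq_of_lt h]
        · have hjn : j = n := by omega
          rw [← hj1, hjn, Nat.mod_self, hc0]
          exact hcn.symm
      rw [hcm1]
      exact hstep j (by omega)
    set k := Nat.find hPex with hkdef
    obtain ⟨hkpos, d, hper, hedge⟩ : P k := Nat.find_spec hPex
    have hminP : ∀ m, m < k → ¬ P m := fun m hm => Nat.find_min hPex hm
    have hnotS : ∀ m, d m ∉ S := fun m => (hedge m).1
    have hneq : ∀ m, d m ≠ d (m+1) := fun m => (hedge m).2.2.1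
    have hle : ∀ m, dot2 (p (d m)) (x (d (m+1))) ≤ dot2 (p (d m)) (x (d m)) :=
      fun m => (hedge m).2.2.2
    have hper' : ∀ q m, d (m + q * k) = d m := by
      intro q
      induction q with
      | zero => simp
      | succ q ih => intro m; rw [Nat.succ_mul, ← Nat.add_assoc, hper, ih]
    have hmod : ∀ m, d m = d (m % k) := by
      intro m
      conv_lhs => rw [← Nat.mod_add_div' m k]
      rw [hper']
    have hcong : ∀ s t, s % k = t % k → d s = d t := by
      intro s t h
      rw [hmod s, hmod t, h]
    -- k ≥ 3
    have hk1 : k ≠ 1 := by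
      intro h
      apply hneq 0
      have := hper 0
      rw [h] at this
      simpa using this.symm
    have hk2 : k ≠ 2 := by
      intro h
      have hd2 : d 2 = d 0 := by
        have := hper 0
        rw [h] at this
        simpa using this
      have h21 := hle 1
      rw [hd2] at h21
      rcases H (d 0) (d 1) (hneq 0) (hle 0) h21 with h' | h'
      · exact hnotS 0 h'
      · exact hnotS 1 h'
    have hk3 : 3 ≤ k := by omega
    -- injectivity
    have haux : ∀ s t, s < t → t < k → d s ≠ d t := by
      intro s t hst htk heq
      set L := t - s with hLdef
      have hL0 : 0 < L := by omega
      apply hminP L (by omega)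
      refine ⟨hL0, fun m => d (s + m % L),
        fun m => by show d (s + (m + L) % L) = d (s + m % L); rw [Nat.add_mod_right], ?_⟩
      intro m
      show d (s + m % L) ∉ S ∧ d (s + (m + 1) % L) ∉ S ∧ d (s + m % L) ≠ d (s + (m + 1) % L) ∧
        dot2 (p (d (s + m % L))) (x (d (s + (m + 1) % L))) ≤
          dot2 (p (d (s + m % L))) (x (d (s + m % L)))
      set j := m % L with hjdef
      have hj : j < L := Nat.mod_lt _ hL0
      have hj1 : (j + 1) % L = (m + 1) % L := Nat.ModEq.add_right 1 (Nat.mod_modEq m L)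
      have hdm1 : d (s + (m+1) % L) = d (s + j + 1) := by
        rcases Nat.lt_or_ge (j+1) L with h | h
        · rw [← hj1, Nat.mod_eq_of_lt h, Nat.add_assoc]
        · have hjL : j + 1 = L := by omega
          rw [← hj1, hjL, Nat.mod_self]
          have h1 : s + j + 1 = t := by omega
          rw [h1, ← heq]
          simp
      rw [hdm1]
      exact hedge (s + j)
    have hinj : ∀ s t, s < k → t < k → d s = d t → s = t := by
      intro s t hs ht heq
      by_contra hne'
      rcases Nat.lt_or_ge s t with h | h
      · exact haux s t h ht heq
      · exact haux t s (by omega) hs heq.symm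
    -- no chords
    have hgt : ∀ s t, s < k → t < k → t ≠ s → t ≠ (s + 1) % k →
        dot2 (p (d s)) (x (d s)) < dot2 (p (d s)) (x (d t)) := by
      intro s t hs ht hts hts1
      by_contra hnotlt
      push_neg at hnotlt
      have hds : d s ≠ d t := fun h => hts (hinj s t hs ht h).symm
      set L := (s + k - t) % k with hLdef
      have hLcase : (t < s ∧ L = s - t) ∨ (s < t ∧ L = s + k - t) := by
        rcases Nat.lt_or_ge (s + k - t) k with h | h
        · exact Or.inr ⟨by omega, by rw [hLdef, Nat.mod_eq_of_lt h]⟩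
        · refine Or.inl ⟨by omega, ?_⟩
          rw [hLdef, Nat.mod_eq_sub_mod h, show s + k - t - k = s - t from by omega,
            Nat.mod_eq_of_lt (by omega)]
      have hs1k : (s + 1) % k = 0 ∧ s + 1 = k ∨ (s + 1) % k = s + 1 ∧ s + 1 < k := by
        rcases Nat.lt_or_ge (s + 1) k with h | h
        · exact Or.inr ⟨Nat.mod_eq_of_lt h, h⟩
        · have h2 : s + 1 = k := by omega
          exact Or.inl ⟨by rw [h2, Nat.mod_self], h2⟩
      have hL0 : 0 < L := by rcases hLcase with ⟨h1, h2⟩ | ⟨h1, h2⟩ <;> omega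
      have hLk : L + 1 < k := by
        rcases hLcase with ⟨h1, h2⟩ | ⟨h1, h2⟩ <;> rcases hs1k with ⟨h3, h4⟩ | ⟨h3, h4⟩ <;> omega
      have hdtL : d (t + L) = d s := by
        apply hcong
        have h1 : (t + L) % k = (t + (s + k - t)) % k :=
          Nat.ModEq.add_left t (Nat.mod_modEq (s + k - t) k)
        rw [h1, show t + (s + k - t) = s + k from by omega, Nat.add_mod_right,
          Nat.mod_eq_of_lt hs]
      apply hminP (L + 1) (by omega)
      refine ⟨Nat.succ_pos L, fun m => d (t + m % (L + 1)),
        fun m => by show d (t + (m + (L+1)) % (L + 1)) = d (t + m % (L + 1)); rw [Nat.add_mod_right], ?_⟩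
      intro m
      show d (t + m % (L + 1)) ∉ S ∧ d (t + (m + 1) % (L + 1)) ∉ S ∧
        d (t + m % (L + 1)) ≠ d (t + (m + 1) % (L + 1)) ∧
        dot2 (p (d (t + m % (L + 1)))) (x (d (t + (m + 1) % (L + 1)))) ≤
          dot2 (p (d (t + m % (L + 1)))) (x (d (t + m % (L + 1))))
      set j := m % (L + 1) with hjdef
      have hj : j < L + 1 := Nat.mod_lt _ (Nat.succ_pos L)
      have hj1 : (j + 1) % (L + 1) = (m + 1) % (L + 1) :=
        Nat.ModEq.add_right 1 (Nat.mod_modEq m (L + 1))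
      rcases Nat.lt_or_ge (j + 1) (L + 1) with h | h
      · have e1 : d (t + (m + 1) % (L + 1)) = d (t + j + 1) := by
          rw [← hj1, Nat.mod_eq_of_lt h, Nat.add_assoc]
        rw [e1]
        exact hedge (t + j)
      · have hjL : j = L := by omega
        have e2 : d (t + (m + 1) % (L + 1)) = d t := by
          rw [← hj1, hjL, Nat.mod_self]
          simp
        rw [e2, hjL, hdtL]
        exact ⟨hnotS s, hnotS t, hds, hnotlt⟩
    -- normalized versions
    have hmodadd : ∀ s : ℕ, (s % k + 1) % k = (s + 1) % k :=
      fun s => Nat.ModEq.add_right 1 (Nat.mod_modEq s k)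
    have hgt' : ∀ s t : ℕ, t % k ≠ s % k → t % k ≠ (s + 1) % k →
        dot2 (p (d s)) (x (d s)) < dot2 (p (d s)) (x (d t)) := by
      intro s t h1 h2
      have h3 := hgt (s % k) (t % k) (Nat.mod_lt _ hkpos) (Nat.mod_lt _ hkpos) h1
        (by rw [hmodadd]; exact h2)
      rw [hmod s, hmod t]
      exact h3
    have hlt' : ∀ s : ℕ, dot2 (p (d s)) (x (d (s + 1))) < dot2 (p (d s)) (x (d s)) :=
      fun s => lt_of_le_of_ne (hle s) (hnoties _ _ (hneq s))
    have hsmin : ∀ s t : ℕ, t % k ≠ s % k →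
        dot2 (p (d (s + k - 1))) (x (d s)) < dot2 (p (d (s + k - 1))) (x (d t)) := by
      intro s t hts
      have hps : d (s + k - 1 + 1) = d s := by
        rw [show s + k - 1 + 1 = s + k from by omega, hper]
      by_cases hcase : t % k = (s + k - 1) % k
      · have hdt : d t = d (s + k - 1) := hcong t _ hcase
        rw [hdt, ← hps]
        exact hlt' (s + k - 1)
      · have h2 : t % k ≠ (s + k - 1 + 1) % k := by
          rw [show s + k - 1 + 1 = s + k from by omega, Nat.add_mod_right]
          exact hts
        calc dot2 (p (d (s + k - 1))) (x (d s))
            = dot2 (p (d (s + k - 1))) (x (d (s + k - 1 + 1))) := by rw [hps]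
          _ < dot2 (p (d (s + k - 1))) (x (d (s + k - 1))) := hlt' _
          _ < _ := hgt' (s + k - 1) t hcase h2
    have hune : ∀ s t : ℕ, s % k ≠ t % k → x (d s) 0 ≠ x (d t) 0 := by
      intro s t h
      exact pairA (p (d (s + k - 1))) (p (d (t + k - 1))) (x (d s)) (x (d t))
        (hp _ 1) (hp _ 1) (hsmin s t h.symm) (hsmin t s h)
    have hadj : ∀ s l : ℕ, l % k ≠ s % k → l % k ≠ (s + 1) % k →
        ¬ ((x (d (s + 1)) 0 < x (d l) 0 ∧ x (d l) 0 < x (d s) 0) ∨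
           (x (d s) 0 < x (d l) 0 ∧ x (d l) 0 < x (d (s + 1)) 0)) := by
      intro s l h1 h2 hbet
      have e1 := hlt' s
      have e2 := hgt' s l h1 h2
      have e3 := hsmin l (s + 1) h2.symm
      have e4 := hsmin l s h1.symm
      rcases hbet with ⟨hb1, hb2⟩ | ⟨hb1, hb2⟩
      · exact pairB (p (d s)) (p (d (l + k - 1))) (x (d (s + 1))) (x (d s)) (x (d l))
          (hp _ 1) (hp _ 1) (x (d l) 0 - x (d (s + 1)) 0) (x (d s) 0 - x (d l) 0)
          (by linarith) (by linarith) (by ring) e1 e2 e3 e4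
      · exact pairB (p (d s)) (p (d (l + k - 1))) (x (d (s + 1))) (x (d s)) (x (d l))
          (hp _ 1) (hp _ 1) (x (d (s + 1)) 0 - x (d l) 0) (x (d l) 0 - x (d s) 0)
          (by linarith) (by linarith) (by ring) e1 e2 e3 e4
    -- endgame
    obtain ⟨j0, hj0mem, hj0min⟩ :=
      (Finset.range k).exists_min_image (fun l => x (d l) 0) ⟨0, Finset.mem_range.2 hkpos⟩
    have hj0k : j0 < k := Finset.mem_range.1 hj0mem
    have hj0min' : ∀ l : ℕ, x (d j0) 0 ≤ x (d l) 0 := by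
      intro l
      rw [hmod l]
      exact hj0min _ (Finset.mem_range.2 (Nat.mod_lt _ hkpos))
    have hdvdne : ∀ a b : ℕ, a ≤ b → ¬ (k ∣ b - a) → b % k ≠ a % k := by
      intro a b hab hdvd h
      exact hdvd ((Nat.modEq_iff_dvd' hab).1 h.symm)
    have f1 : (j0 + 1) % k ≠ j0 % k := by
      intro h
      have := (Nat.modEq_iff_dvd' (by omega : j0 ≤ j0 + 1)).1 h.symm
      simp at this
      omega
    have f2 : (j0 + k - 1) % k ≠ j0 % k := by
      intro h
      have := (Nat.modEq_iff_dvd' (by omega : j0 ≤ j0 + k - 1)).1 h.symm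
      rw [show j0 + k - 1 - j0 = k - 1 from by omega] at this
      have := Nat.le_of_dvd (by omega) this
      omega
    have f3 : (j0 + k - 1) % k ≠ (j0 + 1) % k := by
      intro h
      have := (Nat.modEq_iff_dvd' (by omega : j0 + 1 ≤ j0 + k - 1)).1 h.symm
      rw [show j0 + k - 1 - (j0 + 1) = k - 2 from by omega] at this
      have := Nat.le_of_dvd (by omega) this
      omega
    have f4 : d (j0 + k - 1 + 1) = d j0 := by
      rw [show j0 + k - 1 + 1 = j0 + k from by omega, hper]
    have f5 : (j0 + k - 1 + 1) % k = j0 % k := by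
      rw [show j0 + k - 1 + 1 = j0 + k from by omega, Nat.add_mod_right]
    have hu1 : x (d j0) 0 < x (d (j0 + 1)) 0 :=
      lt_of_le_of_ne (hj0min' _) (hune j0 (j0 + 1) f1.symm)
    have hu0 : x (d j0) 0 < x (d (j0 + k - 1)) 0 :=
      lt_of_le_of_ne (hj0min' _) (hune j0 (j0 + k - 1) f2.symm)
    have hd01 : x (d (j0 + k - 1)) 0 ≠ x (d (j0 + 1)) 0 := hune _ _ f3
    rcases lt_or_gt_of_ne hd01 with h | h
    · -- u n0 < u n1 : use hadj at s = j0, l = j0 + k - 1, second disjunct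
      exact hadj j0 (j0 + k - 1) f2 f3 (Or.inr ⟨hu0, h⟩)
    · -- u n1 < u n0 : use hadj at s = j0 + k - 1, l = j0 + 1, first disjunct
      apply hadj (j0 + k - 1) (j0 + 1) f3.symm (by rw [f5]; exact f1)
      rw [f4]
      exact Or.inl ⟨hu1, h⟩
end

section
/- Let (p_i, x_i), i ∈ ι, be a non-degenerate two-commodity consumer data-set on a finite index set. Then the minimum cardinality of a set S ⊆ ι whose removal makes the revealed preference digraph acyclic (i.e. D_⪰ restricted to ι∖S is acyclic) equals the minimum cardinality of a vertex cover of the auxiliary undirected graph G_⪰. -/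
lemma succ_mod_ne {m k : ℕ} (hm : 3 ≤ m) (hk : k < m) : (k + 1) % m ≠ k := by
  rcases Nat.lt_or_ge (k + 1) m with h | h
  · rw [Nat.mod_eq_of_lt h]; omega
  · have hkm : k + 1 = m := by omega
    rw [hkm, Nat.mod_self]; omega

lemma pred_mod {m s : ℕ} (hm : 0 < m) (hs : s < m) :
    ((s + m - 1) % m + 1) % m = s := by
  rw [Nat.mod_add_mod]
  have h : s + m - 1 + 1 = s + m := by omega
  rw [h, Nat.add_mod_right, Nat.mod_eq_of_lt hs]

lemma core_geom (m : ℕ) (hm : 3 ≤ m) (q w : ℕ → Fin 2 → ℝ)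
    (hq : ∀ k i, 0 ≤ q k i)
    (hinj : ∀ k l, k < m → l < m → k ≠ l → w k ≠ w l)
    (h1 : ∀ k, k < m → dot2 (q k) (w ((k + 1) % m)) < dot2 (q k) (w k))
    (h2 : ∀ k j, k < m → j < m → w j ≠ w k → w j ≠ w ((k + 1) % m) →
      dot2 (q k) (w k) < dot2 (q k) (w j)) : False := by
  have hm0 : 0 < m := by omega
  -- star : strict convexity of the point set along the first coordinate
  have star : ∀ r s t μ, r < m → s < m → t < m → w s ≠ w r → w s ≠ w t →
      0 ≤ μ → μ ≤ 1 → w s 0 = μ * w r 0 + (1 - μ) * w t 0 →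
      w s 1 < μ * w r 1 + (1 - μ) * w t 1 := by
    intro r s t μ hr hs ht hsr hst hμ0 hμ1 hu
    set k := (s + m - 1) % m with hkdef
    have hk : k < m := Nat.mod_lt _ hm0
    have hks : (k + 1) % m = s := pred_mod hm0 hs
    have hb := h1 k hk
    rw [hks] at hb
    have habove : ∀ j, j < m → w j ≠ w s → dot2 (q k) (w k) ≤ dot2 (q k) (w j) := by
      intro j hj hjs
      by_cases hjk : w j = w k
      · rw [hjk]
      · exact le_of_lt (h2 k j hk hj hjk (by rw [hks]; exact hjs))
    have hr' := habove r hr (Ne.symm hsr)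
    have ht' := habove t ht (Ne.symm hst)
    simp only [dot2_eq] at hb hr' ht'
    have hβ : 0 ≤ q k 1 := hq k 1
    have hrμ := mul_le_mul_of_nonneg_left hr' hμ0
    have htμ := mul_le_mul_of_nonneg_left ht' (by linarith : (0:ℝ) ≤ 1 - μ)
    have huα : q k 0 * w s 0 = q k 0 * (μ * w r 0 + (1 - μ) * w t 0) := by rw [hu]
    -- combine: q k 1 * w s 1 < q k 1 * combo
    have hβv : q k 1 * w s 1 < q k 1 * (μ * w r 1 + (1 - μ) * w t 1) := by nlinarith
    have hβpos : 0 < q k 1 := by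
      rcases hβ.lt_or_eq with h | h
      · exact h
      · exfalso; rw [← h] at hβv; simp at hβv
    exact lt_of_mul_lt_mul_left hβv hβ
  -- first coordinates are pairwise distinct
  have uinj : ∀ r s, r < m → s < m → w r ≠ w s → w r 0 ≠ w s 0 := by
    intro r s hr hs hrs he
    have hA := star r s r 1 hr hs hr (Ne.symm hrs) (Ne.symm hrs) zero_le_one le_rfl
      (by rw [← he]; ring)
    have hB := star s r s 1 hs hr hs hrs hrs zero_le_one le_rfl (by rw [he]; ring)
    nlinarith
  -- adjacency: no point strictly between a point and its successor (in first coordinate)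
  have adj : ∀ k j μ, k < m → j < m → 0 < μ → μ < 1 →
      w j 0 = μ * w ((k + 1) % m) 0 + (1 - μ) * w k 0 → False := by
    intro k j μ hk hj hμ0 hμ1 hu
    set s := (k + 1) % m with hsdef
    have hs : s < m := Nat.mod_lt _ hm0
    have hskne : s ≠ k := succ_mod_ne hm hk
    have hsk : w s ≠ w k := hinj s k hs hk hskne
    have hus : w s 0 ≠ w k 0 := uinj s k hs hk hsk
    have hjk : w j 0 ≠ w k 0 := by
      intro h
      apply hus
      have : μ * w s 0 = μ * w k 0 := by nlinarith
      exact mul_left_cancel₀ (ne_of_gt hμ0) this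
    have hjs : w j 0 ≠ w s 0 := by
      intro h
      apply hus
      have : (1 - μ) * w k 0 = (1 - μ) * w s 0 := by nlinarith
      have := mul_left_cancel₀ (by linarith : (1:ℝ) - μ ≠ 0) this
      exact this.symm
    have hwjk : w j ≠ w k := fun h => hjk (by rw [h])
    have hwjs : w j ≠ w s := fun h => hjs (by rw [h])
    have hb := h1 k hk
    rw [← hsdef] at hb
    have ha := h2 k j hk hj hwjk (by rw [← hsdef]; exact hwjs)
    have hstar := star s j k μ hs hj hk hwjs hwjk (le_of_lt hμ0) (le_of_lt hμ1) hu
    simp only [dot2_eq] at hb ha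
    have hβ : 0 ≤ q k 1 := hq k 1
    have hbμ := mul_lt_mul_of_pos_left hb hμ0
    have hstarβ := mul_le_mul_of_nonneg_left hstar.le hβ
    have huα : q k 0 * w j 0 = q k 0 * (μ * w s 0 + (1 - μ) * w k 0) := by rw [hu]
    nlinarith
  -- take the point with maximal first coordinate
  obtain ⟨M, hMmem, hMmax⟩ := (Finset.range m).exists_max_image (fun j => w j 0)
    ⟨0, Finset.mem_range.mpr hm0⟩
  rw [Finset.mem_range] at hMmem
  have hMmax' : ∀ j, j < m → w j 0 ≤ w M 0 := fun j hj =>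
    hMmax j (Finset.mem_range.mpr hj)
  set s1 := (M + 1) % m with hs1def
  set s2 := (M + m - 1) % m with hs2def
  have hs1 : s1 < m := Nat.mod_lt _ hm0
  have hs2 : s2 < m := Nat.mod_lt _ hm0
  have h21 : (s2 + 1) % m = M := pred_mod hm0 hMmem
  have hs1M : s1 ≠ M := succ_mod_ne hm hMmem
  have hs2M : s2 ≠ M := by
    intro h
    rw [h] at h21
    exact succ_mod_ne hm hMmem h21
  have u1 : w s1 0 < w M 0 :=
    lt_of_le_of_ne (hMmax' s1 hs1) (uinj s1 M hs1 hMmem (hinj s1 M hs1 hMmem hs1M))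
  have u2 : w s2 0 < w M 0 :=
    lt_of_le_of_ne (hMmax' s2 hs2) (uinj s2 M hs2 hMmem (hinj s2 M hs2 hMmem hs2M))
  rcases lt_trichotomy (w s1 0) (w s2 0) with h | h | h
  · -- s2 strictly between s1 and M : contradiction via adj with k = M
    have hd0 : (0:ℝ) < w M 0 - w s1 0 := by linarith
    exact adj M s2 ((w M 0 - w s2 0) / (w M 0 - w s1 0)) hMmem hs2
      (div_pos (by linarith) hd0)
      ((div_lt_one hd0).mpr (by linarith))
      (by rw [← hs1def]; field_simp [hd0.ne']; ring)
  · -- equal first coordinates ⇒ s1 = s2 ⇒ arithmetic contradiction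
    have hw : w s1 = w s2 := by
      by_contra hne
      exact uinj s1 s2 hs1 hs2 hne h
    have hss : s1 = s2 := by
      by_contra hne
      exact hinj s1 s2 hs1 hs2 hne hw
    -- (M+1) % m = (M+m-1) % m is impossible for 3 ≤ m
    have e2 : (M + m - 1) % m = if M = 0 then m - 1 else M - 1 := by
      rcases Nat.eq_zero_or_pos M with h0 | h0
      · subst h0
        have hrw : 0 + m - 1 = m - 1 := by omega
        rw [hrw, if_pos rfl]
        exact Nat.mod_eq_of_lt (by omega)
      · have hrw : M + m - 1 = (M - 1) + m := by omega
        rw [hrw, Nat.add_mod_right, Nat.mod_eq_of_lt (by omega)]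
        simp [Nat.pos_iff_ne_zero.mp h0]
    have e1 : (M + 1) % m = if M + 1 = m then 0 else M + 1 := by
      rcases eq_or_ne (M + 1) m with h0 | h0
      · rw [h0, Nat.mod_self]; simp [h0]
      · rw [Nat.mod_eq_of_lt (by omega)]; simp [h0]
    rw [hs1def, hs2def, e1, e2] at hss
    split_ifs at hss <;> omega
  · -- s1 strictly between s2 and M : contradiction via adj with k = s2
    have hd0 : (0:ℝ) < w M 0 - w s2 0 := by linarith
    exact adj s2 s1 ((w s1 0 - w s2 0) / (w M 0 - w s2 0)) hs2 hs1
      (div_pos (by linarith) hd0)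
      ((div_lt_one hd0).mpr (by linarith))
      (by rw [h21]; field_simp; ring)

/-- Extract an indexed path from a transitive closure witness. -/
lemma transGen_path {α : Type*} {r : α → α → Prop} {a b : α} (h : Relation.TransGen r a b) :
    ∃ n : ℕ, ∃ g : ℕ → α, 0 < n ∧ g 0 = a ∧ g n = b ∧ ∀ t < n, r (g t) (g (t + 1)) := by
  induction h with
  | @single c hac =>
    refine ⟨1, fun t => if t = 0 then a else c, Nat.one_pos, rfl, rfl, ?_⟩
    intro t ht
    have ht0 : t = 0 := by omega
    subst ht0
    simpa using hac
  | @tail b c hab hbc ih =>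
    obtain ⟨n, g, hn, h0, hnb, hstep⟩ := ih
    refine ⟨n + 1, fun t => if t ≤ n then g t else c, by omega, by simpa using h0, by simp, ?_⟩
    intro t ht
    rcases Nat.lt_or_ge t n with hlt | hge
    · simp only [if_pos (by omega : t ≤ n), if_pos (by omega : t + 1 ≤ n)]
      exact hstep t hlt
    · have htn : t = n := by omega
      subst htn
      simp only [if_pos le_rfl, if_neg (by omega : ¬ t + 1 ≤ t)]
      rw [hnb]
      exact hbc

/-- Build a periodic cyclic orbit from finitely many steps closing up. -/
lemma cyc_of_steps {α : Type*} (r : α → α → Prop) (h : ℕ → α) (t d : ℕ) (hd : 0 < d)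
    (hstep : ∀ a, a + 1 < d → r (h (t + a)) (h (t + a + 1)))
    (hlast : r (h (t + (d - 1))) (h t)) :
    ∃ H : ℕ → α, (∀ s, H (s + d) = H s) ∧ ∀ s, r (H s) (H (s + 1)) := by
  refine ⟨fun s => h (t + s % d), fun s => by simp [Nat.add_mod_right], fun s => ?_⟩
  simp only
  have ha : s % d < d := Nat.mod_lt _ hd
  rcases Nat.lt_or_ge (s % d + 1) d with hlt | hge
  · have h1 : (s + 1) % d = s % d + 1 := by rw [← Nat.mod_add_mod, Nat.mod_eq_of_lt hlt]
    rw [h1, ← Nat.add_assoc]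
    exact hstep _ (by omega)
  · have he : s % d = d - 1 := by omega
    have h1 : (s + 1) % d = 0 := by
      rw [← Nat.mod_add_mod, show s % d + 1 = d from by omega, Nat.mod_self]
    rw [h1, Nat.add_zero, he]
    exact hlast

lemma cover_acyclic {ι : Type*} (p x : ι → Fin 2 → ℝ)
    (hp : ∀ i k, 0 ≤ p i k)
    (hdistinct : ∀ i j, i ≠ j → x i ≠ x j)
    (hnoties : ∀ i j, i ≠ j → dot2 (p i) (x j) ≠ dot2 (p i) (x i))
    (S : Finset ι)
    (hV : ∀ i j, i ≠ j → dot2 (p i) (x j) ≤ dot2 (p i) (x i) →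
      dot2 (p j) (x i) ≤ dot2 (p j) (x j) → i ∈ S ∨ j ∈ S)
    (i : ι)
    (hcyc : Relation.TransGen
      (fun a b => a ∉ S ∧ b ∉ S ∧ a ≠ b ∧ dot2 (p a) (x b) ≤ dot2 (p a) (x a)) i i) :
    False := by
  set R : ι → ι → Prop :=
    fun a b => a ∉ S ∧ b ∉ S ∧ a ≠ b ∧ dot2 (p a) (x b) ≤ dot2 (p a) (x a) with hRdef
  obtain ⟨n, g, hn, hg0, hgn, hgstep⟩ := transGen_path hcyc
  have hCn : 0 < n ∧ ∃ f : ℕ → ι, (∀ t, f (t + n) = f t) ∧ ∀ t, R (f t) (f (t + 1)) := by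
    refine ⟨hn, ?_⟩
    exact cyc_of_steps R g 0 n hn
      (fun a ha => by simpa using hgstep a (by omega))
      (by
        have := hgstep (n - 1) (by omega)
        rw [show n - 1 + 1 = n from by omega, hgn, ← hg0] at this
        simpa using this)
  obtain ⟨n₀, ⟨hpos, h, hper, hstep⟩, hmin⟩ :
      ∃ n₀, (0 < n₀ ∧ ∃ f : ℕ → ι, (∀ t, f (t + n₀) = f t) ∧ ∀ t, R (f t) (f (t + 1))) ∧
        ∀ d, (0 < d ∧ ∃ f : ℕ → ι, (∀ t, f (t + d) = f t) ∧ ∀ t, R (f t) (f (t + 1))) →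
          n₀ ≤ d := by
    refine ⟨sInf {d | 0 < d ∧ ∃ f : ℕ → ι, (∀ t, f (t + d) = f t) ∧ ∀ t, R (f t) (f (t + 1))},
      ?_, fun d hd => Nat.sInf_le hd⟩
    exact Nat.sInf_mem
      (⟨n, hCn⟩ : Set.Nonempty
        {d | 0 < d ∧ ∃ f : ℕ → ι, (∀ t, f (t + d) = f t) ∧ ∀ t, R (f t) (f (t + 1))})
  have hnotS : ∀ t, h t ∉ S := fun t => (hstep t).1
  -- injectivity on a fundamental window, by minimality
  have hinj : ∀ t t', t < t' → t' < n₀ → h t ≠ h t' := by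
    intro t t' htt' ht' heq
    have hd0 : 0 < t' - t := by omega
    obtain ⟨H, hH1, hH2⟩ := cyc_of_steps R h t (t' - t) hd0
      (fun a _ => hstep (t + a))
      (by
        have := hstep (t + (t' - t - 1))
        rw [show t + (t' - t - 1) + 1 = t' from by omega, ← heq] at this
        exact this)
    have := hmin (t' - t) ⟨hd0, H, hH1, hH2⟩
    omega
  have hsucc : ∀ k, k < n₀ → h ((k + 1) % n₀) = h (k + 1) := by
    intro k hk
    rcases Nat.lt_or_ge (k + 1) n₀ with hlt | hge
    · rw [Nat.mod_eq_of_lt hlt]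
    · have hkn : k + 1 = n₀ := by omega
      rw [hkn, Nat.mod_self]
      have := hper 0
      rw [Nat.zero_add] at this
      exact this.symm
  -- short cycles
  rcases show n₀ = 1 ∨ n₀ = 2 ∨ 3 ≤ n₀ from by omega with h1 | h2 | h3
  · have hs := hstep 0
    have he : h 1 = h 0 := by
      have := hper 0
      rw [Nat.zero_add, h1] at this
      exact this
    exact (hs.2.2.1) (by rw [he])
  · have hs0 := hstep 0
    have hs1 := hstep 1
    have he : h 2 = h 0 := by
      have := hper 0
      rw [Nat.zero_add, h2] at this
      exact this
    rw [show (1:ℕ) + 1 = 2 from rfl, he] at hs1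
    rcases hV (h 0) (h 1) hs0.2.2.1 hs0.2.2.2 hs1.2.2.2 with hin | hin
    · exact hnotS 0 hin
    · exact hnotS 1 hin
  -- long cycles: the geometric core
  · apply core_geom n₀ h3 (fun t => p (h t)) (fun t => x (h t)) (fun k i => hp _ _)
    · -- injectivity of bundles
      intro k l hk hl hkl
      have hne : h k ≠ h l := by
        rcases Nat.lt_or_ge k l with hlt | hge
        · exact hinj k l hlt hl
        · exact fun he => hinj l k (by omega) hk he.symm
      exact hdistinct _ _ hne
    · -- consecutive strict preference
      intro k hk
      rw [hsucc k hk]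
      have hs := hstep k
      exact lt_of_le_of_ne hs.2.2.2 (hnoties _ _ hs.2.2.1)
    · -- non-consecutive points are strictly outside, else a shorter cycle exists
      intro k j hk hj hne1 hne2
      by_contra hc
      push_neg at hc
      have hkj : h j ≠ h k := fun he => hne1 (by rw [he])
      have hkj2 : h j ≠ h (k + 1) := fun he => hne2 (by rw [he, ← hsucc k hk])
      have hjump : R (h k) (h j) := ⟨hnotS k, hnotS j, Ne.symm hkj, hc⟩
      have hjk : j ≠ k := fun he => hkj (by rw [he])
      set d := if j ≤ k then k - j else k + n₀ - j with hdd
      have hd0 : 0 < d := by simp only [hdd]; split_ifs <;> omega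
      have hjd : h (j + d) = h k := by
        simp only [hdd]
        split_ifs with hle
        · rw [show j + (k - j) = k from by omega]
        · rw [show j + (k + n₀ - j) = k + n₀ from by omega]
          exact hper k
      have hdn : d + 1 < n₀ := by
        have hd1 : d ≤ n₀ - 1 := by simp only [hdd]; split_ifs <;> omega
        rcases eq_or_lt_of_le hd1 with hde | hdl
        · exfalso
          simp only [hdd] at hde
          split_ifs at hde with hle
          · -- k = n₀ - 1, j = 0 : then h j = h (k+1)
            have hk1 : k + 1 = n₀ := by omega
            have hj0 : j = 0 := by omega
            apply hkj2
            rw [hj0, hk1]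
            have := hper 0
            rw [Nat.zero_add] at this
            exact this.symm
          · have hjk1 : j = k + 1 := by omega
            exact hkj2 (by rw [hjk1])
        · omega
      obtain ⟨H, hH1, hH2⟩ := cyc_of_steps R h j (d + 1) (by omega)
        (fun a _ => hstep (j + a))
        (by
          rw [show d + 1 - 1 = d from by omega, hjd]
          exact hjump)
      have := hmin (d + 1) ⟨by omega, H, hH1, hH2⟩
      omega

/-- For a non-degenerate two-commodity consumer data-set on a finite index set, the
minimum number of data points whose removal makes the revealed preference digraph
acyclic equals the minimum cardinality of a vertex cover of the auxiliary undirected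
graph `G_⪰`. -/
theorem stmt4 {ι : Type*} [Fintype ι] [DecidableEq ι] (p x : ι → Fin 2 → ℝ)
    (hp : ∀ i k, 0 ≤ p i k) (hx : ∀ i k, 0 ≤ x i k)
    (hdistinct : ∀ i j, i ≠ j → x i ≠ x j)
    (hnoties : ∀ i j, i ≠ j → dot2 (p i) (x j) ≠ dot2 (p i) (x i)) :
    sInf {k : ℕ | ∃ S : Finset ι, S.card = k ∧
        ∀ i, ¬ Relation.TransGen
          (fun a b => a ∉ S ∧ b ∉ S ∧ a ≠ b ∧ dot2 (p a) (x b) ≤ dot2 (p a) (x a)) i i} =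
      sInf {k : ℕ | ∃ S : Finset ι, S.card = k ∧
        ∀ i j, i ≠ j → dot2 (p i) (x j) ≤ dot2 (p i) (x i) →
          dot2 (p j) (x i) ≤ dot2 (p j) (x j) → i ∈ S ∨ j ∈ S} := by
  have key : ∀ S : Finset ι,
      (∀ i, ¬ Relation.TransGen
          (fun a b => a ∉ S ∧ b ∉ S ∧ a ≠ b ∧ dot2 (p a) (x b) ≤ dot2 (p a) (x a)) i i) ↔
      (∀ i j, i ≠ j → dot2 (p i) (x j) ≤ dot2 (p i) (x i) →
          dot2 (p j) (x i) ≤ dot2 (p j) (x j) → i ∈ S ∨ j ∈ S) := by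
    intro S
    constructor
    · intro hA i j hne hij hji
      by_contra hcon
      push_neg at hcon
      exact hA i (Relation.TransGen.tail
        (Relation.TransGen.single ⟨hcon.1, hcon.2, hne, hij⟩)
        ⟨hcon.2, hcon.1, hne.symm, hji⟩)
    · intro hV i hcyc
      exact cover_acyclic p x hp hdistinct hnoties S hV i hcyc
  congr 1
  ext k
  simp only [Set.mem_setOf_eq]
  exact exists_congr fun S => and_congr_right fun _ => key S
end

section
/- Let (p_i, x_i), i ∈ ι, be a non-degenerate two-commodity consumer data-set and let i, j, k ∈ ι be distinct indices such that {i,j} and {j,k} are edges of the auxiliary undirected graph G_⪰ but {i,k} is not an edge of G_⪰ (so i, j, k induce a path in G_⪰). If x_i ∈ x_j^↖ (i.e. (x_i)_1 ≤ (x_j)_1 and (x_i)_2 ≥ (x_j)_2), then x_k ∈ x_j^↖; similarly, if x_i ∈ x_j^↘ (i.e. (x_i)_1 ≥ (x_j)_1 and (x_i)_2 ≤ (x_j)_2), then x_k ∈ x_j^↘. -/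
/-- Slope-chaining lemma: if `a` is strictly NW of `b`, `b` strictly NW of `c`,
price `q` reveals `a ⪰ b`, and price `r` reveals both `b ⪰ a` and `b ⪰ c`,
then `q` also (weakly) reveals `a ⪰ c`. -/
lemma key_step (a0 a1 b0 b1 c0 c1 q0 q1 r0 r1 : ℝ)
    (hq0 : 0 ≤ q0) (hq1 : 0 ≤ q1) (hr1 : 0 ≤ r1)
    (hab0 : a0 < b0) (hbc0 : b0 < c0) (hba1 : b1 < a1) (hcb1 : c1 < b1)
    (h1 : q0 * b0 + q1 * b1 < q0 * a0 + q1 * a1)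
    (h2 : r0 * a0 + r1 * a1 < r0 * b0 + r1 * b1)
    (h3 : r0 * c0 + r1 * c1 < r0 * b0 + r1 * b1) :
    q0 * c0 + q1 * c1 ≤ q0 * a0 + q1 * a1 := by
  have hr0pos : 0 < r0 := by nlinarith [mul_nonneg hr1 (le_of_lt (sub_pos.mpr hba1))]
  -- q0 * r1 ≤ q1 * r0
  have hqr : q0 * r1 ≤ q1 * r0 := by
    nlinarith [mul_le_mul_of_nonneg_left (le_of_lt h1) hr1,
      mul_le_mul_of_nonneg_left (le_of_lt h2) hq1]
  -- q0 * (c0 - b0) ≤ q1 * (b1 - c1)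
  have hstep : q0 * (c0 - b0) ≤ q1 * (b1 - c1) := by
    nlinarith [mul_le_mul_of_nonneg_left (le_of_lt h3) hq0,
      mul_le_mul_of_nonneg_right hqr (le_of_lt (sub_pos.mpr hcb1))]
  nlinarith [hstep, h1]

/-- Core argument on real numbers: the NW direction of the induced-path lemma. -/
lemma aux_main (a0 a1 b0 b1 c0 c1 q0 q1 r0 r1 s0 s1 : ℝ)
    (hq0 : 0 ≤ q0) (hq1 : 0 ≤ q1) (hr0 : 0 ≤ r0) (hr1 : 0 ≤ r1)
    (hs0 : 0 ≤ s0) (hs1 : 0 ≤ s1)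
    (h1 : q0 * b0 + q1 * b1 < q0 * a0 + q1 * a1)
    (h2 : r0 * a0 + r1 * a1 < r0 * b0 + r1 * b1)
    (h3 : r0 * c0 + r1 * c1 < r0 * b0 + r1 * b1)
    (h4 : s0 * b0 + s1 * b1 < s0 * c0 + s1 * c1)
    (neik : ¬ (q0 * c0 + q1 * c1 ≤ q0 * a0 + q1 * a1 ∧
      s0 * a0 + s1 * a1 ≤ s0 * c0 + s1 * c1))
    (hNW : a0 ≤ b0 ∧ b1 ≤ a1) :
    c0 ≤ b0 ∧ b1 ≤ c1 := by
  obtain ⟨hNW0, hNW1⟩ := hNW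
  -- strictness of the NW relation between a and b
  have hab0 : a0 < b0 := by nlinarith [mul_le_mul_of_nonneg_left hNW1 hr1]
  have hba1 : b1 < a1 := by nlinarith [mul_le_mul_of_nonneg_left hNW0 hq0]
  by_contra hcon
  rw [not_and_or] at hcon
  -- x k is strictly SE of x j
  have hbc0 : b0 < c0 := by
    by_contra h
    push_neg at h
    rcases hcon with h' | h'
    · exact h' h
    · push_neg at h'
      nlinarith [mul_le_mul_of_nonneg_left h hs0,
        mul_le_mul_of_nonneg_left (le_of_lt h') hs1]
  have hcb1 : c1 < b1 := by
    by_contra h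
    push_neg at h
    nlinarith [mul_le_mul_of_nonneg_left (le_of_lt hbc0) hr0,
      mul_le_mul_of_nonneg_left h hr1]
  -- then {i,k} would be an edge
  refine neik ⟨?_, ?_⟩
  · exact key_step a0 a1 b0 b1 c0 c1 q0 q1 r0 r1 hq0 hq1 hr1
      hab0 hbc0 hba1 hcb1 h1 h2 h3
  · have := key_step c1 c0 b1 b0 a1 a0 s1 s0 r1 r0 hs1 hs0 hr0
      hcb1 hba1 hbc0 hab0 (by linarith) (by linarith) (by linarith)
    linarith

/-- **Induced-path lemma.** Let `i, j, k` induce a path in the auxiliary undirected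
graph `G_⪰` of a non-degenerate two-commodity data-set (edges `{i,j}` and `{j,k}` but
not `{i,k}`). If `x i` lies north-west of `x j` then so does `x k`; if `x i` lies
south-east of `x j` then so does `x k`. -/
theorem stmt6 {ι : Type*} (p x : ι → Fin 2 → ℝ)
    (hp : ∀ i k, 0 ≤ p i k) (hx : ∀ i k, 0 ≤ x i k)
    (hdistinct : ∀ i j, i ≠ j → x i ≠ x j)
    (hnoties : ∀ i j, i ≠ j → dot2 (p i) (x j) ≠ dot2 (p i) (x i))
    (i j k : ι) (hij : i ≠ j) (hjk : j ≠ k) (hik : i ≠ k)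
    (eij : dot2 (p i) (x j) ≤ dot2 (p i) (x i) ∧ dot2 (p j) (x i) ≤ dot2 (p j) (x j))
    (ejk : dot2 (p j) (x k) ≤ dot2 (p j) (x j) ∧ dot2 (p k) (x j) ≤ dot2 (p k) (x k))
    (neik : ¬ (dot2 (p i) (x k) ≤ dot2 (p i) (x i) ∧
      dot2 (p k) (x i) ≤ dot2 (p k) (x k))) :
    ((x i 0 ≤ x j 0 ∧ x i 1 ≥ x j 1) → (x k 0 ≤ x j 0 ∧ x k 1 ≥ x j 1)) ∧
    ((x i 0 ≥ x j 0 ∧ x i 1 ≤ x j 1) → (x k 0 ≥ x j 0 ∧ x k 1 ≤ x j 1)) := by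
  simp only [dot2, Fin.sum_univ_two] at eij ejk neik hnoties
  have h1 : p i 0 * x j 0 + p i 1 * x j 1 < p i 0 * x i 0 + p i 1 * x i 1 :=
    lt_of_le_of_ne eij.1 (hnoties i j hij)
  have h2 : p j 0 * x i 0 + p j 1 * x i 1 < p j 0 * x j 0 + p j 1 * x j 1 :=
    lt_of_le_of_ne eij.2 (hnoties j i hij.symm)
  have h3 : p j 0 * x k 0 + p j 1 * x k 1 < p j 0 * x j 0 + p j 1 * x j 1 :=
    lt_of_le_of_ne ejk.1 (hnoties j k hjk)
  have h4 : p k 0 * x j 0 + p k 1 * x j 1 < p k 0 * x k 0 + p k 1 * x k 1 :=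
    lt_of_le_of_ne ejk.2 (hnoties k j hjk.symm)
  constructor
  · intro hNW
    exact aux_main (x i 0) (x i 1) (x j 0) (x j 1) (x k 0) (x k 1)
      (p i 0) (p i 1) (p j 0) (p j 1) (p k 0) (p k 1)
      (hp i 0) (hp i 1) (hp j 0) (hp j 1) (hp k 0) (hp k 1)
      h1 h2 h3 h4 neik ⟨hNW.1, hNW.2⟩
  · intro hSE
    have := aux_main (x i 1) (x i 0) (x j 1) (x j 0) (x k 1) (x k 0)
      (p i 1) (p i 0) (p j 1) (p j 0) (p k 1) (p k 0)
      (hp i 1) (hp i 0) (hp j 1) (hp j 0) (hp k 1) (hp k 0)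
      (by linarith) (by linarith) (by linarith) (by linarith)
      (fun h => neik ⟨by linarith [h.1], by linarith [h.2]⟩)
      ⟨hSE.2, hSE.1⟩
    exact ⟨this.2, this.1⟩
end

section
/- Let (p_i, x_i), i ∈ ι, be a non-degenerate two-commodity consumer data-set, let k ≥ 4, and let v : ℤ/kℤ → ι be an injective map such that v(a) and v(b) are adjacent in the auxiliary undirected graph G_⪰ if and only if a − b = ±1 (so the vertices v(0),...,v(k−1) induce a chordless cycle, i.e. a hole, in G_⪰). Then for every a ∈ ℤ/kℤ, either both x_{v(a−1)} and x_{v(a+1)} lie in x_{v(a)}^↖, or both x_{v(a−1)} and x_{v(a+1)} lie in x_{v(a)}^↘. -/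
/-- `y` lies (weakly) north-west of `z` in the plane. -/
def NW (y z : Fin 2 → ℝ) : Prop := y 0 ≤ z 0 ∧ y 1 ≥ z 1

/-- `y` lies (weakly) south-east of `z` in the plane. -/
def SE (y z : Fin 2 → ℝ) : Prop := y 0 ≥ z 0 ∧ y 1 ≤ z 1

/-- Two mutually (strictly) revealed-preferred bundles are strictly NW/SE of each other. -/
lemma side_aux (pa pb a b : Fin 2 → ℝ) (hpa : ∀ k, 0 ≤ pa k) (hpb : ∀ k, 0 ≤ pb k)
    (h1 : dot2 pa b < dot2 pa a) (h2 : dot2 pb a < dot2 pb b) :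
    (b 0 < a 0 ∧ a 1 < b 1) ∨ (a 0 < b 0 ∧ b 1 < a 1) := by
  simp only [dot2, Fin.sum_univ_two] at h1 h2
  have hA : b 0 < a 0 ∨ b 1 < a 1 := by
    by_contra h
    push_neg at h
    nlinarith [mul_nonneg (hpa 0) (sub_nonneg.2 h.1), mul_nonneg (hpa 1) (sub_nonneg.2 h.2)]
  have hB : a 0 < b 0 ∨ a 1 < b 1 := by
    by_contra h
    push_neg at h
    nlinarith [mul_nonneg (hpb 0) (sub_nonneg.2 h.1), mul_nonneg (hpb 1) (sub_nonneg.2 h.2)]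
  rcases hA with hA | hA <;> rcases hB with hB | hB
  · exact absurd hB (not_lt.2 hA.le)
  · exact Or.inl ⟨hA, hB⟩
  · exact Or.inr ⟨hB, hA⟩
  · exact absurd hB (not_lt.2 hA.le)

/-- Key geometric lemma: if `y` is strictly NW of `m`, `z` strictly SE of `m`, both below
`m`'s budget line, and `m` is below both `y`'s and `z`'s budget lines, then `y` and `z`
are mutually revealed preferred. -/
lemma key_aux (pm py pz m y z : Fin 2 → ℝ)
    (hpm : ∀ k, 0 ≤ pm k) (hpy : ∀ k, 0 ≤ py k) (hpz : ∀ k, 0 ≤ pz k)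
    (hy0 : y 0 < m 0) (hy1 : m 1 < y 1) (hz0 : m 0 < z 0) (hz1 : z 1 < m 1)
    (h1 : dot2 py m < dot2 py y) (h2 : dot2 pm y < dot2 pm m)
    (h3 : dot2 pz m < dot2 pz z) (h4 : dot2 pm z < dot2 pm m) :
    dot2 py z ≤ dot2 py y ∧ dot2 pz y ≤ dot2 pz z := by
  simp only [dot2, Fin.sum_univ_two] at *
  have hd1 : 0 < m 0 - y 0 := by linarith
  have hd2 : 0 < y 1 - m 1 := by linarith
  have hd3 : 0 < z 0 - m 0 := by linarith
  have hd4 : 0 < m 1 - z 1 := by linarith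
  -- pm 1 > 0 and pm 0 > 0
  have hr1 : 0 < pm 1 := by
    rcases (hpm 1).lt_or_eq with h | h
    · exact h
    · exfalso; nlinarith [mul_nonneg (hpm 0) hd3.le]
  -- key slope inequality: d2 * d3 < d4 * d1
  have hK : (y 1 - m 1) * (z 0 - m 0) < (m 1 - z 1) * (m 0 - y 0) := by
    have e2 : pm 1 * (y 1 - m 1) < pm 0 * (m 0 - y 0) := by nlinarith
    have e4 : pm 0 * (z 0 - m 0) < pm 1 * (m 1 - z 1) := by nlinarith
    have p1 : pm 1 * (y 1 - m 1) * (z 0 - m 0) < pm 0 * (m 0 - y 0) * (z 0 - m 0) :=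
      mul_lt_mul_of_pos_right e2 hd3
    have p2 : pm 0 * (z 0 - m 0) * (m 0 - y 0) < pm 1 * (m 1 - z 1) * (m 0 - y 0) :=
      mul_lt_mul_of_pos_right e4 hd1
    have p3 : pm 1 * ((y 1 - m 1) * (z 0 - m 0)) < pm 1 * ((m 1 - z 1) * (m 0 - y 0)) := by
      nlinarith
    exact lt_of_mul_lt_mul_left p3 (hpm 1)
  constructor
  · -- py · z ≤ py · y
    have e1 : py 0 * (m 0 - y 0) < py 1 * (y 1 - m 1) := by nlinarith
    -- step: py 0 * (z 0 - m 0) ≤ py 1 * (m 1 - z 1)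
    have step : py 0 * (z 0 - m 0) ≤ py 1 * (m 1 - z 1) := by
      have q1 : py 0 * (m 0 - y 0) * (z 0 - m 0) < py 1 * (y 1 - m 1) * (z 0 - m 0) :=
        mul_lt_mul_of_pos_right e1 hd3
      have q2 : py 1 * ((y 1 - m 1) * (z 0 - m 0)) ≤ py 1 * ((m 1 - z 1) * (m 0 - y 0)) :=
        mul_le_mul_of_nonneg_left hK.le (hpy 1)
      have q3 : py 0 * (z 0 - m 0) * (m 0 - y 0) ≤ py 1 * (m 1 - z 1) * (m 0 - y 0) := by
        nlinarith
      have := le_of_mul_le_mul_right (by nlinarith : py 0 * (z 0 - m 0) * (m 0 - y 0)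
        ≤ py 1 * (m 1 - z 1) * (m 0 - y 0)) hd1
      nlinarith
    nlinarith
  · -- pz · y ≤ pz · z
    have e3 : pz 1 * (m 1 - z 1) < pz 0 * (z 0 - m 0) := by nlinarith
    have step : pz 1 * (y 1 - m 1) ≤ pz 0 * (m 0 - y 0) := by
      have q1 : pz 1 * (m 1 - z 1) * (m 0 - y 0) < pz 0 * (z 0 - m 0) * (m 0 - y 0) :=
        mul_lt_mul_of_pos_right e3 hd1
      have q2 : pz 1 * ((y 1 - m 1) * (z 0 - m 0)) ≤ pz 1 * ((m 1 - z 1) * (m 0 - y 0)) :=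
        mul_le_mul_of_nonneg_left hK.le (hpz 1)
      have q3 : pz 1 * (y 1 - m 1) * (z 0 - m 0) ≤ pz 0 * (m 0 - y 0) * (z 0 - m 0) := by
        nlinarith
      exact le_of_mul_le_mul_right q3 hd3
    nlinarith

/-- If `v(0), …, v(k-1)` induce a hole (chordless cycle, `k ≥ 4`) in the auxiliary
undirected graph `G_⪰` of a non-degenerate two-commodity data-set, then for each `a`
either both neighbours `x (v (a-1))`, `x (v (a+1))` lie north-west of `x (v a)`, or
both lie south-east of it. -/
theorem stmt7 {ι : Type*} (p x : ι → Fin 2 → ℝ)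
    (hp : ∀ i k, 0 ≤ p i k) (hx : ∀ i k, 0 ≤ x i k)
    (hdistinct : ∀ i j, i ≠ j → x i ≠ x j)
    (hnoties : ∀ i j, i ≠ j → dot2 (p i) (x j) ≠ dot2 (p i) (x i))
    (k : ℕ) (hk : 4 ≤ k) (v : ZMod k → ι) (hv : Function.Injective v)
    (hadj : ∀ a b : ZMod k,
      (v a ≠ v b ∧ dot2 (p (v a)) (x (v b)) ≤ dot2 (p (v a)) (x (v a)) ∧
        dot2 (p (v b)) (x (v a)) ≤ dot2 (p (v b)) (x (v b)))
      ↔ (a - b = 1 ∨ b - a = 1)) :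
    ∀ a : ZMod k,
      (NW (x (v (a - 1))) (x (v a)) ∧ NW (x (v (a + 1))) (x (v a))) ∨
      (SE (x (v (a - 1))) (x (v a)) ∧ SE (x (v (a + 1))) (x (v a))) := by
  intro a
  haveI : NeZero k := ⟨by omega⟩
  have hcast : ∀ n : ℕ, 0 < n → n < k → ((n : ZMod k) ≠ 0) := by
    intro n hn hnk h
    rw [ZMod.natCast_eq_zero_iff] at h
    exact absurd (Nat.le_of_dvd hn h) (by omega)
  have h1ne : (1 : ZMod k) ≠ 0 := by
    have := hcast 1 one_pos (by omega); simpa using this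
  have h2ne : (2 : ZMod k) ≠ 0 := by
    have := hcast 2 (by omega) (by omega); simpa using this
  have h3ne : (3 : ZMod k) ≠ 0 := by
    have := hcast 3 (by omega) (by omega); simpa using this
  -- adjacency of a with a-1 and a+1
  obtain ⟨hne1, hwa1, hwb1⟩ := (hadj a (a - 1)).mpr (Or.inl (by ring))
  obtain ⟨hne2, hwa2, hwb2⟩ := (hadj a (a + 1)).mpr (Or.inr (by ring))
  have h1 : dot2 (p (v (a - 1))) (x (v a)) < dot2 (p (v (a - 1))) (x (v (a - 1)))  :=
    hwb1.lt_of_ne (hnoties _ _ hne1.symm)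
  have h2 : dot2 (p (v a)) (x (v (a - 1))) < dot2 (p (v a)) (x (v a)) :=
    hwa1.lt_of_ne (hnoties _ _ hne1)
  have h3 : dot2 (p (v (a + 1))) (x (v a)) < dot2 (p (v (a + 1))) (x (v (a + 1))) :=
    hwb2.lt_of_ne (hnoties _ _ hne2.symm)
  have h4 : dot2 (p (v a)) (x (v (a + 1))) < dot2 (p (v a)) (x (v a)) :=
    hwa2.lt_of_ne (hnoties _ _ hne2)
  -- a-1 and a+1 are not adjacent
  have hne13 : v (a - 1) ≠ v (a + 1) := by
    intro h
    have := hv h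
    have h2' : (2 : ZMod k) = 0 := by linear_combination -this
    exact h2ne h2'
  have hnadj : ¬ (dot2 (p (v (a - 1))) (x (v (a + 1))) ≤ dot2 (p (v (a - 1))) (x (v (a - 1))) ∧
      dot2 (p (v (a + 1))) (x (v (a - 1))) ≤ dot2 (p (v (a + 1))) (x (v (a + 1)))) := by
    intro ⟨hA, hB⟩
    rcases (hadj (a - 1) (a + 1)).mp ⟨hne13, hA, hB⟩ with h | h
    · exact h3ne (by linear_combination -h)
    · exact h1ne (by linear_combination h)
  -- sides
  have hy := side_aux (p (v a)) (p (v (a - 1))) (x (v a)) (x (v (a - 1)))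
    (hp _) (hp _) h2 h1
  have hz := side_aux (p (v a)) (p (v (a + 1))) (x (v a)) (x (v (a + 1)))
    (hp _) (hp _) h4 h3
  rcases hy with hy | hy <;> rcases hz with hz | hz
  · exact Or.inl ⟨⟨hy.1.le, hy.2.le⟩, ⟨hz.1.le, hz.2.le⟩⟩
  · -- y NW (strict), z SE (strict): chord, contradiction
    exact absurd (key_aux (p (v a)) (p (v (a - 1))) (p (v (a + 1)))
      (x (v a)) (x (v (a - 1))) (x (v (a + 1)))
      (hp _) (hp _) (hp _) hy.1 hy.2 hz.1 hz.2 h1 h2 h3 h4) hnadj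
  · -- y SE (strict), z NW (strict): chord, contradiction
    have := key_aux (p (v a)) (p (v (a + 1))) (p (v (a - 1)))
      (x (v a)) (x (v (a + 1))) (x (v (a - 1)))
      (hp _) (hp _) (hp _) hz.1 hz.2 hy.1 hy.2 h3 h4 h1 h2
    exact absurd ⟨this.2, this.1⟩ hnadj
  · exact Or.inr ⟨⟨hy.1.le, hy.2.le⟩, ⟨hz.1.le, hz.2.le⟩⟩
end

section
/- Let (p_i, x_i), i ∈ ι, be a non-degenerate two-commodity consumer data-set. Then the auxiliary undirected graph G_⪰ contains no odd hole on at least 5 vertices: there is no odd k ≥ 5 and injective map v : ℤ/kℤ → ι such that v(a) and v(b) are adjacent in G_⪰ if and only if a − b = ±1. -/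
/-- Crossing: a mutual strict edge forces the bundles to cross. -/
lemma crossE (qi qj a b : Fin 2 → ℝ)
    (hqi : ∀ k, 0 ≤ qi k) (hqj : ∀ k, 0 ≤ qj k)
    (e1 : dot2 qi b < dot2 qi a) (e2 : dot2 qj a < dot2 qj b) :
    (a 0 < b 0 ∧ b 1 < a 1) ∨ (b 0 < a 0 ∧ a 1 < b 1) := by
  simp only [dot2, Fin.sum_univ_two] at e1 e2
  rcases lt_trichotomy (a 0) (b 0) with h | h | h
  · left
    refine ⟨h, ?_⟩
    by_contra hc
    push_neg at hc
    nlinarith [mul_nonneg (hqi 0) (sub_nonneg.mpr h.le), mul_nonneg (hqi 1) (sub_nonneg.mpr hc)]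
  · exfalso
    have h1 : b 1 < a 1 := by nlinarith [hqi 0, hqi 1]
    have h2 : a 1 < b 1 := by nlinarith [hqj 0, hqj 1]
    linarith
  · right
    refine ⟨h, ?_⟩
    by_contra hc
    push_neg at hc
    nlinarith [mul_nonneg (hqj 0) (sub_nonneg.mpr h.le), mul_nonneg (hqj 1) (sub_nonneg.mpr hc)]

/-- Chord lemma: a monotone path of two mutual edges yields a chord. -/
lemma chord (qi qj ql a b c : Fin 2 → ℝ)
    (hqi : ∀ k, 0 ≤ qi k) (hqj : ∀ k, 0 ≤ qj k) (hql : ∀ k, 0 ≤ ql k)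
    (e1 : dot2 qi b < dot2 qi a) (e2 : dot2 qj a < dot2 qj b)
    (e3 : dot2 qj c < dot2 qj b) (e4 : dot2 ql b < dot2 ql c)
    (hab : a 0 < b 0) (hbc : b 0 < c 0) :
    dot2 qi c < dot2 qi a ∧ dot2 ql a < dot2 ql c := by
  simp only [dot2, Fin.sum_univ_two] at *
  have hab0 : (0:ℝ) ≤ qi 0 * (b 0 - a 0) := mul_nonneg (hqi 0) (by linarith)
  have h1 : 0 < qi 1 * (a 1 - b 1) := by nlinarith
  have hba1 : b 1 < a 1 := by
    by_contra hc; push_neg at hc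
    nlinarith [mul_nonneg (hqi 1) (sub_nonneg.mpr hc)]
  have hqi1 : 0 < qi 1 := by
    rcases (hqi 1).lt_or_eq with h | h
    · exact h
    · exfalso; nlinarith
  have hbc0 : (0:ℝ) ≤ qj 0 * (c 0 - b 0) := mul_nonneg (hqj 0) (by linarith)
  have h2 : 0 < qj 1 * (b 1 - c 1) := by nlinarith
  have hcb1 : c 1 < b 1 := by
    by_contra hc2; push_neg at hc2
    nlinarith [mul_nonneg (hqj 1) (sub_nonneg.mpr hc2)]
  have hqj1 : 0 < qj 1 := by
    rcases (hqj 1).lt_or_eq with h | h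
    · exact h
    · exfalso; nlinarith
  -- mediant inequality M : (a1-b1)*(c0-b0) < (b1-c1)*(b0-a0)
  have e2' : qj 1 * (a 1 - b 1) < qj 0 * (b 0 - a 0) := by nlinarith
  have e3' : qj 0 * (c 0 - b 0) < qj 1 * (b 1 - c 1) := by nlinarith
  have M : (a 1 - b 1) * (c 0 - b 0) < (b 1 - c 1) * (b 0 - a 0) := by
    have t1 := mul_lt_mul_of_pos_right e2' (by linarith : (0:ℝ) < c 0 - b 0)
    have t2 := mul_lt_mul_of_pos_right e3' (by linarith : (0:ℝ) < b 0 - a 0)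
    have chain : qj 1 * ((a 1 - b 1) * (c 0 - b 0)) < qj 1 * ((b 1 - c 1) * (b 0 - a 0)) := by
      ring_nf at t1 t2 ⊢; linarith
    exact lt_of_mul_lt_mul_left chain hqj1.le
  have e1' : qi 0 * (b 0 - a 0) < qi 1 * (a 1 - b 1) := by nlinarith
  have e4' : ql 1 * (b 1 - c 1) < ql 0 * (c 0 - b 0) := by nlinarith
  constructor
  · -- qi 0 * (c 0 - a 0) < qi 1 * (a 1 - c 1)
    have step : qi 0 * (c 0 - b 0) < qi 1 * (b 1 - c 1) := by
      have t1 := mul_lt_mul_of_pos_right e1' (by linarith : (0:ℝ) < c 0 - b 0)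
      have t2 := mul_lt_mul_of_pos_left M hqi1
      have chain : qi 0 * (c 0 - b 0) * (b 0 - a 0) < qi 1 * (b 1 - c 1) * (b 0 - a 0) := by
        ring_nf at t1 t2 ⊢; linarith
      exact lt_of_mul_lt_mul_right chain (by linarith)
    nlinarith
  · -- ql 1 * (a 1 - c 1) < ql 0 * (c 0 - a 0)
    have step : ql 1 * (a 1 - b 1) < ql 0 * (b 0 - a 0) := by
      have t1 := mul_le_mul_of_nonneg_left M.le (hql 1)
      have t2 := mul_lt_mul_of_pos_right e4' (by linarith : (0:ℝ) < b 0 - a 0)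
      have chain : ql 1 * (a 1 - b 1) * (c 0 - b 0) < ql 0 * (b 0 - a 0) * (c 0 - b 0) := by
        ring_nf at t1 t2 ⊢; linarith
      exact lt_of_mul_lt_mul_right chain (by linarith)
    nlinarith

/-- Parity: a strictly alternating predicate on `ZMod k` with `k` odd is impossible. -/
lemma no_alternation {k : ℕ} [NeZero k] (hodd : Odd k) (f : ZMod k → Prop)
    (hf : ∀ a, f (a + 1) ↔ ¬ f a) : False := by
  have key : ∀ n : ℕ, ∀ a : ZMod k,
      (Even n → (f (a + n) ↔ f a)) ∧ (Odd n → (f (a + n) ↔ ¬ f a)) := by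
    intro n
    induction n with
    | zero => intro a; simp
    | succ n ih =>
      intro a
      have hstep : f (a + (n + 1 : ℕ)) ↔ ¬ f (a + n) := by
        have : (a + (n + 1 : ℕ)) = (a + n) + 1 := by push_cast; ring
        rw [this]; exact hf _
      obtain ⟨ihe, iho⟩ := ih a
      constructor
      · intro he
        have hn : Odd n := Nat.not_even_iff_odd.mp (Nat.even_add_one.mp he)
        rw [hstep, iho hn]; tauto
      · intro ho
        have hn : Even n := by
          by_contra h
          exact (Nat.not_even_iff_odd.mpr ho) (Nat.even_add_one.mpr h)
        rw [hstep, ihe hn]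
  have := (key k 0).2 hodd
  rw [ZMod.natCast_self] at this
  simp at this

/-- From `n ∣ m` impossible facts in `ZMod k`. -/
lemma not_small_eq_zero {k : ℕ} (hk : 5 ≤ k) (n : ℕ) (hn : 0 < n) (hn3 : n ≤ 3)
    (h : (n : ZMod k) = 0) : False := by
  haveI : NeZero k := ⟨by omega⟩
  rw [ZMod.natCast_eq_zero_iff] at h
  have := Nat.le_of_dvd hn h
  omega

/-- **No odd holes.** The auxiliary undirected graph `G_⪰` of a non-degenerate
two-commodity data-set contains no odd hole on at least 5 vertices. -/
theorem stmt8 {ι : Type*} (p x : ι → Fin 2 → ℝ)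
    (hp : ∀ i k, 0 ≤ p i k) (hx : ∀ i k, 0 ≤ x i k)
    (hdistinct : ∀ i j, i ≠ j → x i ≠ x j)
    (hnoties : ∀ i j, i ≠ j → dot2 (p i) (x j) ≠ dot2 (p i) (x i)) :
    ∀ k : ℕ, 5 ≤ k → Odd k → ∀ v : ZMod k → ι, Function.Injective v →
      ¬ (∀ a b : ZMod k,
        (v a ≠ v b ∧ dot2 (p (v a)) (x (v b)) ≤ dot2 (p (v a)) (x (v a)) ∧
          dot2 (p (v b)) (x (v a)) ≤ dot2 (p (v b)) (x (v b)))
        ↔ (a - b = 1 ∨ b - a = 1)) := by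
  intro k hk hodd v hinj hcyc
  haveI : NeZero k := ⟨by omega⟩
  -- consecutive edges, strict
  have cons : ∀ a : ZMod k, v (a + 1) ≠ v a ∧
      dot2 (p (v (a+1))) (x (v a)) ≤ dot2 (p (v (a+1))) (x (v (a+1))) ∧
      dot2 (p (v a)) (x (v (a+1))) ≤ dot2 (p (v a)) (x (v a)) := by
    intro a
    exact (hcyc (a+1) a).mpr (Or.inl (by ring))
  have scons : ∀ a : ZMod k,
      dot2 (p (v (a+1))) (x (v a)) < dot2 (p (v (a+1))) (x (v (a+1))) ∧
      dot2 (p (v a)) (x (v (a+1))) < dot2 (p (v a)) (x (v a)) := by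
    intro a
    obtain ⟨hne, h1, h2⟩ := cons a
    exact ⟨lt_of_le_of_ne h1 (hnoties _ _ hne), lt_of_le_of_ne h2 (hnoties _ _ hne.symm)⟩
  -- crossing of consecutive bundles
  have crossc : ∀ a : ZMod k,
      (x (v a) 0 < x (v (a+1)) 0 ∧ x (v (a+1)) 1 < x (v a) 1) ∨
      (x (v (a+1)) 0 < x (v a) 0 ∧ x (v a) 1 < x (v (a+1)) 1) := by
    intro a
    exact crossE (p (v a)) (p (v (a+1))) (x (v a)) (x (v (a+1)))
      (hp _) (hp _) (scons a).2 (scons a).1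
  -- the key contradiction from a chord between a and a+2
  have nochord : ∀ a : ZMod k,
      dot2 (p (v a)) (x (v (a+2))) < dot2 (p (v a)) (x (v a)) →
      dot2 (p (v (a+2))) (x (v a)) < dot2 (p (v (a+2))) (x (v (a+2))) → False := by
    intro a h1 h2
    have hne : v a ≠ v (a + 2) := by
      intro h
      have := hinj h
      have h2' : (2 : ZMod k) = 0 := by
        have : a + 2 = a + 0 := by rw [add_zero]; exact this.symm
        exact (add_left_cancel this)
      exact not_small_eq_zero hk 2 (by norm_num) (by norm_num) (by exact_mod_cast h2')
    have := (hcyc a (a+2)).mp ⟨hne, h1.le, h2.le⟩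
    rcases this with h | h
    · -- a - (a+2) = 1, i.e. -2 = 1, i.e. 3 = 0
      have h3 : (3 : ZMod k) = 0 := by linear_combination -h
      exact not_small_eq_zero hk 3 (by norm_num) (by norm_num) (by exact_mod_cast h3)
    · -- (a+2) - a = 1, i.e. 2 = 1, i.e. 1 = 0
      have h3 : (1 : ZMod k) = 0 := by linear_combination h
      exact not_small_eq_zero hk 1 (by norm_num) (by norm_num) (by exact_mod_cast h3)
  set f : ZMod k → Prop := fun a => x (v a) 0 < x (v (a+1)) 0 with hfdef
  by_cases hmono : ∃ a : ZMod k, (f a ∧ f (a+1)) ∨ (¬ f a ∧ ¬ f (a+1))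
  · obtain ⟨a, hcase⟩ := hmono
    rcases hcase with ⟨h1, h2⟩ | ⟨h1, h2⟩
    · -- increasing triple a, a+1, a+2
      have hc := chord (p (v a)) (p (v (a+1))) (p (v (a+2)))
        (x (v a)) (x (v (a+1))) (x (v (a+2))) (hp _) (hp _) (hp _)
        (scons a).2 (scons a).1
        ?_ ?_ h1 ?_
      · exact nochord a hc.1 hc.2
      · have := (scons (a+1)).2
        convert this using 3 <;> ring
      · have := (scons (a+1)).1
        convert this using 3 <;> ring
      · have : f (a+1) = (x (v (a+1)) 0 < x (v (a+1+1)) 0) := rfl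
        rw [this] at h2
        convert h2 using 3
        ring
    · -- decreasing triple: reverse roles
      have ga : x (v (a+1)) 0 < x (v a) 0 := by
        rcases crossc a with ⟨hlt, _⟩ | ⟨hlt, _⟩
        · exact absurd hlt h1
        · exact hlt
      have ga1 : x (v (a+2)) 0 < x (v (a+1)) 0 := by
        rcases crossc (a+1) with ⟨hlt, _⟩ | ⟨hlt, _⟩
        · exact absurd (by rw [hfdef]; exact hlt) h2
        · convert hlt using 3 <;> ring
      have hc := chord (p (v (a+2))) (p (v (a+1))) (p (v a))
        (x (v (a+2))) (x (v (a+1))) (x (v a)) (hp _) (hp _) (hp _)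
        ?_ ?_ (scons a).1 (scons a).2 ga1 ga
      · exact nochord a hc.2 hc.1
      · have := (scons (a+1)).1
        convert this using 3 <;> ring
      · have := (scons (a+1)).2
        convert this using 3 <;> ring
  · push_neg at hmono
    refine no_alternation hodd f (fun a => ?_)
    have := hmono a
    tauto
end

section
/- Let (p_i, x_i), i ∈ ι, be a non-degenerate two-commodity consumer data-set, let k ≥ 6, and let v : ℤ/kℤ → ι be an injective map such that v(a) and v(b) are adjacent in the auxiliary undirected graph G_⪰ if and only if a ≠ b and a − b ≠ ±1 (so v(0),...,v(k−1) induce an antihole in G_⪰). Then for every a ∈ ℤ/kℤ, either x_{v(b)} ∈ x_{v(a)}^↖ for all b with b ≠ a and b − a ≠ ±1, or x_{v(b)} ∈ x_{v(a)}^↘ for all such b. -/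
/-- Analytic core: if `b` is strictly NW of `a`, `c` strictly SE of `a`, and the pairs
`(a,b)` and (partially) `(a,c)` are mutually strictly inside each other's budget, then
`c` is strictly inside `b`'s budget. -/
lemma half (pa0 pa1 pb0 pb1 a0 a1 b0 b1 c0 c1 : ℝ)
    (hpb0 : 0 ≤ pb0) (hpb1 : 0 ≤ pb1) (hpa0 : 0 ≤ pa0) (hpa1 : 0 ≤ pa1)
    (hb0 : b0 < a0) (hb1 : a1 < b1) (hc0 : a0 < c0) (hc1 : c1 < a1)
    (h1 : pa0*b0 + pa1*b1 < pa0*a0 + pa1*a1)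
    (h2 : pb0*a0 + pb1*a1 < pb0*b0 + pb1*b1)
    (h3 : pa0*c0 + pa1*c1 < pa0*a0 + pa1*a1) :
    pb0*c0 + pb1*c1 < pb0*b0 + pb1*b1 := by
  have hu0 : 0 < a0 - b0 := by linarith
  have hu1 : 0 < b1 - a1 := by linarith
  have hw0 : 0 < c0 - a0 := by linarith
  have hw1 : 0 < a1 - c1 := by linarith
  have hQ1 : 0 < pa1 := by nlinarith [mul_nonneg hpa0 hw0.le]
  have A : pb0 * (a0 - b0) < pb1 * (b1 - a1) := by linarith
  have B : pa1 * (b1 - a1) < pa0 * (a0 - b0) := by linarith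
  have hdet : pb0 * pa1 < pb1 * pa0 := by
    have key : (pb0 * (a0 - b0)) * (pa1 * (b1 - a1)) < (pb1 * (b1 - a1)) * (pa0 * (a0 - b0)) := by
      apply mul_lt_mul'' A B (mul_nonneg hpb0 hu0.le) (mul_nonneg hpa1 hu1.le)
    have h' : (pb0 * pa1) * ((a0 - b0) * (b1 - a1)) < (pb1 * pa0) * ((a0 - b0) * (b1 - a1)) := by
      nlinarith [key]
    exact lt_of_mul_lt_mul_right h' (mul_pos hu0 hu1).le
  have hC : pa0 * (c0 - a0) < pa1 * (a1 - c1) := by linarith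
  have hPw : pa1 * (pb0*(c0-a0) - pb1*(a1-c1)) < 0 := by
    nlinarith [mul_lt_mul_of_pos_right hdet hw0, mul_le_mul_of_nonneg_left hC.le hpb1]
  have hPw' : pb0*(c0-a0) - pb1*(a1-c1) < 0 := by
    by_contra hcon
    push_neg at hcon
    nlinarith
  linarith

/-- Strict incomparability of mutually revealed-preferred bundles. -/
lemma side (pa pb xa xb : Fin 2 → ℝ) (hpa : ∀ k, 0 ≤ pa k) (hpb : ∀ k, 0 ≤ pb k)
    (e1 : dot2 pa xb < dot2 pa xa) (e2 : dot2 pb xa < dot2 pb xb) :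
    (xb 0 < xa 0 ∧ xa 1 < xb 1) ∨ (xa 0 < xb 0 ∧ xb 1 < xa 1) := by
  simp only [dot2_eq] at e1 e2
  rcases lt_trichotomy (xb 0) (xa 0) with h | h | h
  · left
    refine ⟨h, ?_⟩
    by_contra hc
    push_neg at hc
    nlinarith [mul_nonneg (hpb 0) (by linarith : (0:ℝ) ≤ xa 0 - xb 0),
      mul_nonneg (hpb 1) (by linarith : (0:ℝ) ≤ xa 1 - xb 1)]
  · exfalso
    rcases le_total (xb 1) (xa 1) with h1 | h1
    · nlinarith [mul_nonneg (hpb 0) (by linarith : (0:ℝ) ≤ xa 0 - xb 0),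
        mul_nonneg (hpb 1) (by linarith : (0:ℝ) ≤ xa 1 - xb 1)]
    · nlinarith [mul_nonneg (hpa 0) (by linarith : (0:ℝ) ≤ xb 0 - xa 0),
        mul_nonneg (hpa 1) (by linarith : (0:ℝ) ≤ xb 1 - xa 1)]
  · right
    refine ⟨h, ?_⟩
    by_contra hc
    push_neg at hc
    nlinarith [mul_nonneg (hpa 0) (by linarith : (0:ℝ) ≤ xb 0 - xa 0),
      mul_nonneg (hpa 1) (by linarith : (0:ℝ) ≤ xb 1 - xa 1)]

lemma exists_flip (P : ℕ → Prop) : ∀ n m, m ≤ n → P m → ¬ P n →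
    ∃ t, m ≤ t ∧ t < n ∧ P t ∧ ¬ P (t+1) := by
  intro n
  induction n with
  | zero =>
    intro m hm hPm hPn
    exact absurd (Nat.le_zero.mp hm ▸ hPm) hPn
  | succ n ih =>
    intro m hm hPm hPn
    have hmn : m ≤ n := by
      rcases Nat.lt_succ_iff_lt_or_eq.mp (Nat.lt_succ_of_le hm) with h | h
      · omega
      · exact absurd (h ▸ hPm) hPn
    by_cases hP : P n
    · exact ⟨n, hmn, Nat.lt_succ_self n, hP, hPn⟩
    · obtain ⟨t, h1, h2, h3, h4⟩ := ih m hmn hPm hP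
      exact ⟨t, h1, Nat.lt_succ_of_lt h2, h3, h4⟩

lemma nbr_index {k : ℕ} (hk : 6 ≤ k) [NeZero k] [Fact (1 < k)] (z : ZMod k)
    (h1 : z ≠ 0) (h2 : z ≠ 1) (h3 : z ≠ -1) : 2 ≤ z.val ∧ z.val ≤ k - 2 := by
  have hval : z.val < k := ZMod.val_lt z
  have hz : ((z.val : ℕ) : ZMod k) = z := ZMod.natCast_rightInverse z
  have h0 : z.val ≠ 0 := by
    intro h
    apply h1
    rw [← hz, h]
    simp
  have hne1 : z.val ≠ 1 := by
    intro h
    apply h2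
    rw [← hz, h]
    simp
  have hnek1 : z.val ≠ k - 1 := by
    intro h
    apply h3
    rw [← hz, h, Nat.cast_sub (by omega : 1 ≤ k), ZMod.natCast_self]
    push_cast
    ring
  omega

lemma idx_nbr {k : ℕ} (hk : 6 ≤ k) [NeZero k] [Fact (1 < k)] (j : ℕ)
    (hj2 : 2 ≤ j) (hjk : j ≤ k - 2) (a : ZMod k) :
    (a + (j : ZMod k)) ≠ a ∧ (a + (j : ZMod k)) - a ≠ 1 ∧ a - (a + (j : ZMod k)) ≠ 1 := by
  have hjlt : j < k := by omega
  have hval : ((j : ZMod k)).val = j := ZMod.val_cast_of_lt hjlt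
  have hsub : (a + (j : ZMod k)) - a = (j : ZMod k) := by ring
  refine ⟨?_, ?_, ?_⟩
  · intro h
    have hj0 : (j : ZMod k) = 0 := by
      have := congrArg (· - a) h
      simpa using this
    rw [hj0, ZMod.val_zero] at hval
    omega
  · intro h
    rw [hsub] at h
    rw [h, ZMod.val_one] at hval
    omega
  · intro h
    have hj1 : ((j + 1 : ℕ) : ZMod k) = 0 := by
      push_cast
      have : a - (a + (j : ZMod k)) = -(j : ZMod k) := by ring
      rw [this] at h
      linear_combination -h
    have := ZMod.val_cast_of_lt (show j + 1 < k by omega)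
    rw [hj1, ZMod.val_zero] at this
    omega

/-- If `v(0), …, v(k-1)` induce an antihole (`k ≥ 6`) in the auxiliary undirected graph
`G_⪰` of a non-degenerate two-commodity data-set, then for every `a`, all neighbours of
`v a` on the antihole lie north-west of `x (v a)`, or all lie south-east of it. -/
theorem stmt10 {ι : Type*} (p x : ι → Fin 2 → ℝ)
    (hp : ∀ i k, 0 ≤ p i k) (hx : ∀ i k, 0 ≤ x i k)
    (hdistinct : ∀ i j, i ≠ j → x i ≠ x j)
    (hnoties : ∀ i j, i ≠ j → dot2 (p i) (x j) ≠ dot2 (p i) (x i))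
    (k : ℕ) (hk : 6 ≤ k) (v : ZMod k → ι) (hv : Function.Injective v)
    (hadj : ∀ a b : ZMod k,
      (v a ≠ v b ∧ dot2 (p (v a)) (x (v b)) ≤ dot2 (p (v a)) (x (v a)) ∧
        dot2 (p (v b)) (x (v a)) ≤ dot2 (p (v b)) (x (v b)))
      ↔ (a ≠ b ∧ a - b ≠ 1 ∧ b - a ≠ 1)) :
    ∀ a : ZMod k,
      (∀ b : ZMod k, b ≠ a → b - a ≠ 1 → a - b ≠ 1 → NW (x (v b)) (x (v a))) ∨
      (∀ b : ZMod k, b ≠ a → b - a ≠ 1 → a - b ≠ 1 → SE (x (v b)) (x (v a))) := by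
  intro a
  haveI : NeZero k := ⟨by omega⟩
  haveI : Fact (1 < k) := ⟨by omega⟩
  by_contra hcon
  push_neg at hcon
  obtain ⟨⟨b, hb1, hb2, hb3, hbN⟩, ⟨c, hc1, hc2, hc3, hcS⟩⟩ := hcon
  -- every neighbour is mutually strictly inside `a`'s budget
  have edge : ∀ d : ZMod k, d ≠ a → d - a ≠ 1 → a - d ≠ 1 →
      v a ≠ v d ∧ dot2 (p (v a)) (x (v d)) < dot2 (p (v a)) (x (v a)) ∧
        dot2 (p (v d)) (x (v a)) < dot2 (p (v d)) (x (v d)) := by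
    intro d hd1 hd2 hd3
    obtain ⟨hne, e1, e2⟩ := (hadj a d).mpr ⟨fun h => hd1 h.symm, hd3, hd2⟩
    exact ⟨hne, lt_of_le_of_ne e1 (hnoties (v a) (v d) hne),
      lt_of_le_of_ne e2 (hnoties (v d) (v a) (Ne.symm hne))⟩
  have sides : ∀ d : ZMod k, d ≠ a → d - a ≠ 1 → a - d ≠ 1 →
      (x (v d) 0 < x (v a) 0 ∧ x (v a) 1 < x (v d) 1) ∨
      (x (v a) 0 < x (v d) 0 ∧ x (v d) 1 < x (v a) 1) := by
    intro d hd1 hd2 hd3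
    obtain ⟨hne, e1, e2⟩ := edge d hd1 hd2 hd3
    exact side _ _ _ _ (hp _) (hp _) e1 e2
  -- `b` is strictly SE of `a`, `c` strictly NW of `a`
  have hbSE : x (v a) 0 < x (v b) 0 ∧ x (v b) 1 < x (v a) 1 := by
    rcases sides b hb1 hb2 hb3 with h | h
    · exact absurd ⟨h.1.le, h.2.le⟩ hbN
    · exact h
  have hcNW : x (v c) 0 < x (v a) 0 ∧ x (v a) 1 < x (v c) 1 := by
    rcases sides c hc1 hc2 hc3 with h | h
    · exact h
    · exact absurd ⟨h.1.le, h.2.le⟩ hcS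
  -- index machinery
  have hzb := nbr_index hk (b - a) (sub_ne_zero.mpr hb1) hb2
    (fun h => hb3 (by rw [show a - b = -(b - a) from by ring, h]; ring))
  have hzc := nbr_index hk (c - a) (sub_ne_zero.mpr hc1) hc2
    (fun h => hc3 (by rw [show a - c = -(c - a) from by ring, h]; ring))
  set jb := (b - a).val with hjbdef
  set jc := (c - a).val with hjcdef
  have hbeq : a + ((jb : ℕ) : ZMod k) = b := by
    rw [hjbdef, ZMod.natCast_rightInverse (b - a)]; ring
  have hceq : a + ((jc : ℕ) : ZMod k) = c := by
    rw [hjcdef, ZMod.natCast_rightInverse (c - a)]; ring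
  -- the side predicate on indices
  set P : ℕ → Prop := fun j => x (v a) 0 < x (v (a + (j : ZMod k))) 0 with hPdef
  have hPb : P jb := by rw [hPdef]; simp only []; rw [hbeq]; exact hbSE.1
  have hPc : ¬ P jc := by rw [hPdef]; simp only []; rw [hceq]; exact not_lt.mpr hcNW.1.le
  -- find a flip between consecutive indices, both in [2, k-2]
  have key : ∃ t : ℕ, 2 ≤ t ∧ t + 1 ≤ k - 2 ∧
      ((P t ∧ ¬ P (t+1)) ∨ (¬ P t ∧ P (t+1))) := by
    rcases lt_trichotomy jb jc with h | h | h
    · obtain ⟨t, h1, h2, h3, h4⟩ := exists_flip P jc jb h.le hPb hPc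
      exact ⟨t, by omega, by omega, Or.inl ⟨h3, h4⟩⟩
    · exact absurd (h ▸ hPb) hPc
    · obtain ⟨t, h1, h2, h3, h4⟩ := exists_flip (fun j => ¬ P j) jb jc h.le hPc
        (not_not.mpr hPb)
      exact ⟨t, by omega, by omega, Or.inr ⟨h3, not_not.mp h4⟩⟩
  obtain ⟨t, ht2, htk, htflip⟩ := key
  -- the two consecutive neighbours
  set T := a + ((t : ℕ) : ZMod k) with hTdef
  set T1 := a + (((t + 1 : ℕ)) : ZMod k) with hT1def
  obtain ⟨hT1', hT2', hT3'⟩ := idx_nbr hk t ht2 (by omega) a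
  obtain ⟨hU1', hU2', hU3'⟩ := idx_nbr hk (t+1) (by omega) htk a
  obtain ⟨hneT, eT1, eT2⟩ := edge T hT1' hT2' hT3'
  obtain ⟨hneU, eU1, eU2⟩ := edge T1 hU1' hU2' hU3'
  have hsidesT := sides T hT1' hT2' hT3'
  have hsidesU := sides T1 hU1' hU2' hU3'
  have hT1T : T1 - T = 1 := by
    rw [hTdef, hT1def]
    push_cast
    ring
  have hTneT1 : T ≠ T1 := by
    intro h
    rw [h, sub_self] at hT1T
    exact zero_ne_one hT1T
  -- establish the edge between T and T1, contradicting the antihole structure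
  simp only [dot2_eq] at eT1 eT2 eU1 eU2
  have goal2 : dot2 (p (v T)) (x (v T1)) ≤ dot2 (p (v T)) (x (v T)) ∧
      dot2 (p (v T1)) (x (v T)) ≤ dot2 (p (v T1)) (x (v T1)) := by
    rcases htflip with ⟨hPt, hPt1⟩ | ⟨hPt, hPt1⟩
    · -- T strictly SE of a, T1 strictly NW of a
      have hTse : x (v a) 0 < x (v T) 0 ∧ x (v T) 1 < x (v a) 1 := by
        rcases hsidesT with h | h
        · exact absurd hPt (not_lt.mpr h.1.le)
        · exact h
      have hUnw : x (v T1) 0 < x (v a) 0 ∧ x (v a) 1 < x (v T1) 1 := by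
        rcases hsidesU with h | h
        · exact h
        · exact absurd h.1 (not_lt.mpr (le_of_not_gt hPt1))
      constructor
      · -- p(vT)·x(vT1) < p(vT)·x(vT) : vT is the SE point; mirror of `half`
        simp only [dot2_eq]
        have := half (p (v a) 1) (p (v a) 0) (p (v T) 1) (p (v T) 0)
          (x (v a) 1) (x (v a) 0) (x (v T) 1) (x (v T) 0)
          (x (v T1) 1) (x (v T1) 0)
          (hp _ 1) (hp _ 0) (hp _ 1) (hp _ 0)
          hTse.2 hTse.1 hUnw.2 hUnw.1
          (by linarith) (by linarith) (by linarith)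
        linarith
      · -- p(vT1)·x(vT) < p(vT1)·x(vT1) : vT1 is the NW point
        simp only [dot2_eq]
        have := half (p (v a) 0) (p (v a) 1) (p (v T1) 0) (p (v T1) 1)
          (x (v a) 0) (x (v a) 1) (x (v T1) 0) (x (v T1) 1)
          (x (v T) 0) (x (v T) 1)
          (hp _ 0) (hp _ 1) (hp _ 0) (hp _ 1)
          hUnw.1 hUnw.2 hTse.1 hTse.2
          (by linarith) (by linarith) (by linarith)
        linarith
    · -- T strictly NW of a, T1 strictly SE of a
      have hTnw : x (v T) 0 < x (v a) 0 ∧ x (v a) 1 < x (v T) 1 := by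
        rcases hsidesT with h | h
        · exact h
        · exact absurd h.1 (not_lt.mpr (le_of_not_gt hPt))
      have hUse : x (v a) 0 < x (v T1) 0 ∧ x (v T1) 1 < x (v a) 1 := by
        rcases hsidesU with h | h
        · exact absurd hPt1 (not_lt.mpr h.1.le)
        · exact h
      constructor
      · -- vT is NW point
        simp only [dot2_eq]
        have := half (p (v a) 0) (p (v a) 1) (p (v T) 0) (p (v T) 1)
          (x (v a) 0) (x (v a) 1) (x (v T) 0) (x (v T) 1)
          (x (v T1) 0) (x (v T1) 1)
          (hp _ 0) (hp _ 1) (hp _ 0) (hp _ 1)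
          hTnw.1 hTnw.2 hUse.1 hUse.2
          (by linarith) (by linarith) (by linarith)
        linarith
      · -- vT1 is SE point
        simp only [dot2_eq]
        have := half (p (v a) 1) (p (v a) 0) (p (v T1) 1) (p (v T1) 0)
          (x (v a) 1) (x (v a) 0) (x (v T1) 1) (x (v T1) 0)
          (x (v T) 1) (x (v T) 0)
          (hp _ 1) (hp _ 0) (hp _ 1) (hp _ 0)
          hUse.2 hUse.1 hTnw.2 hTnw.1
          (by linarith) (by linarith) (by linarith)
        linarith
  have hvne : v T ≠ v T1 := fun h => hTneT1 (hv h)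
  obtain ⟨_, _, hfin⟩ := (hadj T T1).mp ⟨hvne, goal2.1, goal2.2⟩
  exact hfin hT1T
end

section
/- Let (p_i, x_i), i ∈ ι, be a non-degenerate two-commodity consumer data-set. Then the auxiliary undirected graph G_⪰ contains no antihole on at least 5 vertices: there is no k ≥ 5 and injective map v : ℤ/kℤ → ι such that v(a) and v(b) are adjacent in G_⪰ if and only if a ≠ b and a − b ≠ ±1. -/
/-- `a` is left-above `b` and they are mutually strictly revealed preferred. -/
def RR {ι : Type*} (p x : ι → Fin 2 → ℝ) (a b : ι) : Prop :=
  x a 0 < x b 0 ∧ x b 1 < x a 1 ∧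
    dot2 (p a) (x b) < dot2 (p a) (x a) ∧ dot2 (p b) (x a) < dot2 (p b) (x b)

lemma RR_or {ι : Type*} {p x : ι → Fin 2 → ℝ} (hp : ∀ i k, 0 ≤ p i k) {a b : ι}
    (hab : dot2 (p a) (x b) < dot2 (p a) (x a))
    (hba : dot2 (p b) (x a) < dot2 (p b) (x b)) :
    RR p x a b ∨ RR p x b a := by
  rw [dot2_eq, dot2_eq] at hab hba
  rcases lt_trichotomy (x a 0) (x b 0) with h | h | h
  · left
    have h1 : x b 1 < x a 1 := by
      by_contra hc
      push_neg at hc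
      nlinarith [mul_le_mul_of_nonneg_left h.le (hp a 0), mul_le_mul_of_nonneg_left hc (hp a 1)]
    exact ⟨h, h1, by rw [dot2_eq, dot2_eq]; linarith, by rw [dot2_eq, dot2_eq]; linarith⟩
  · exfalso
    rw [h] at hab hba
    have h1 : x b 1 < x a 1 := by
      by_contra hc
      push_neg at hc
      nlinarith [mul_le_mul_of_nonneg_left hc (hp a 1)]
    have h2 : x a 1 < x b 1 := by
      by_contra hc
      push_neg at hc
      nlinarith [mul_le_mul_of_nonneg_left hc (hp b 1)]
    linarith
  · right
    have h1 : x a 1 < x b 1 := by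
      by_contra hc
      push_neg at hc
      nlinarith [mul_le_mul_of_nonneg_left h.le (hp b 0), mul_le_mul_of_nonneg_left hc (hp b 1)]
    exact ⟨h, h1, by rw [dot2_eq, dot2_eq]; linarith, by rw [dot2_eq, dot2_eq]; linarith⟩

lemma trans_aux {aa ba ab bb ac bc a0 a1 b0 b1 c0 c1 : ℝ}
    (h1 : 0 ≤ aa) (h2 : 0 ≤ ba) (h3 : 0 ≤ ab) (h4 : 0 ≤ bb) (h5 : 0 ≤ ac) (h6 : 0 ≤ bc)
    (o1 : a0 < b0) (o2 : b0 < c0) (o3 : c1 < b1) (o4 : b1 < a1)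
    (p1 : aa*b0 + ba*b1 < aa*a0 + ba*a1)
    (p2 : ab*a0 + bb*a1 < ab*b0 + bb*b1)
    (p3 : ab*c0 + bb*c1 < ab*b0 + bb*b1)
    (p4 : ac*b0 + bc*b1 < ac*c0 + bc*c1) :
    aa*c0 + ba*c1 < aa*a0 + ba*a1 ∧ ac*a0 + bc*a1 < ac*c0 + bc*c1 := by
  have hbb : 0 < bb := by nlinarith [mul_nonneg h3 (show (0:ℝ) ≤ c0 - b0 by linarith)]
  have hK : (a1-b1)*(c0-b0) < (b1-c1)*(b0-a0) := by
    nlinarith [mul_lt_mul_of_pos_right (show bb*(a1-b1) < ab*(b0-a0) by nlinarith) (show (0:ℝ) < c0-b0 by linarith),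
      mul_lt_mul_of_pos_right (show ab*(c0-b0) < bb*(b1-c1) by nlinarith) (show (0:ℝ) < b0-a0 by linarith), hbb]
  constructor
  · have hx : aa*(c0-b0) < ba*(b1-c1) := by
      nlinarith [mul_lt_mul_of_pos_right (show aa*(b0-a0) < ba*(a1-b1) by nlinarith) (show (0:ℝ) < c0-b0 by linarith),
        mul_le_mul_of_nonneg_left hK.le h2]
    nlinarith
  · have hx : bc*(a1-b1) < ac*(b0-a0) := by
      nlinarith [mul_lt_mul_of_pos_right (show bc*(b1-c1) < ac*(c0-b0) by nlinarith) (show (0:ℝ) < b0-a0 by linarith),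
        mul_le_mul_of_nonneg_left hK.le h6]
    nlinarith

lemma RR_trans {ι : Type*} {p x : ι → Fin 2 → ℝ} (hp : ∀ i k, 0 ≤ p i k) {a b c : ι}
    (h : RR p x a b) (h' : RR p x b c) : RR p x a c := by
  obtain ⟨u1, u2, u3, u4⟩ := h
  obtain ⟨w1, w2, w3, w4⟩ := h'
  rw [dot2_eq, dot2_eq] at u3 u4 w3 w4
  have := trans_aux (hp a 0) (hp a 1) (hp b 0) (hp b 1) (hp c 0) (hp c 1)
    u1 w1 w2 u2 u3 u4 w3 w4
  exact ⟨u1.trans w1, w2.trans u2,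
    by rw [dot2_eq, dot2_eq]; exact this.1, by rw [dot2_eq, dot2_eq]; exact this.2⟩


lemma parity_contra (g : ℕ → Prop) (h : ∀ n, g (n + 1) ↔ ¬ g n) {m : ℕ} (hm : Odd m)
    (he : g m ↔ g 0) : False := by
  have key : ∀ n : ℕ, (g n ↔ g 0) ↔ Even n := by
    intro n
    induction n with
    | zero => simp
    | succ n ih =>
      rw [Nat.even_add_one, ← ih]
      have := h n
      tauto
  exact (Nat.not_even_iff_odd.mpr hm) ((key m).mp he)

/-- **No antiholes.** The auxiliary undirected graph `G_⪰` of a non-degenerate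
two-commodity data-set contains no antihole on at least 5 vertices. -/
theorem stmt11 {ι : Type*} (p x : ι → Fin 2 → ℝ)
    (hp : ∀ i k, 0 ≤ p i k) (hx : ∀ i k, 0 ≤ x i k)
    (hdistinct : ∀ i j, i ≠ j → x i ≠ x j)
    (hnoties : ∀ i j, i ≠ j → dot2 (p i) (x j) ≠ dot2 (p i) (x i)) :
    ∀ k : ℕ, 5 ≤ k → ∀ v : ZMod k → ι, Function.Injective v →
      ¬ (∀ a b : ZMod k,
        (v a ≠ v b ∧ dot2 (p (v a)) (x (v b)) ≤ dot2 (p (v a)) (x (v a)) ∧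
          dot2 (p (v b)) (x (v a)) ≤ dot2 (p (v b)) (x (v b)))
        ↔ (a ≠ b ∧ a - b ≠ 1 ∧ b - a ≠ 1)) := by
  intro k hk v hv hiff
  haveI : NeZero k := ⟨by omega⟩
  have hval : ∀ n : ℕ, n < k → ((n : ZMod k)).val = n := fun n hn => ZMod.val_natCast_of_lt hn
  have hinj : ∀ m n : ℕ, m < k → n < k → ((m : ZMod k) = (n : ZMod k)) → m = n := by
    intro m n hm hn h
    have := congrArg ZMod.val h
    rwa [hval m hm, hval n hn] at this
  have hone : (1 : ZMod k) ≠ 0 := by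
    intro h
    have := hinj 1 0 (by omega) (by omega) (by simpa using h)
    omega
  have hvne : ∀ {a b : ZMod k}, a ≠ b → v a ≠ v b := fun h e => h (hv e)
  have hp' : ∀ (i : ZMod k) (m : Fin 2), 0 ≤ (fun i => p (v i)) i m := fun i m => hp (v i) m
  have hmut : ∀ a b : ZMod k, a ≠ b → a - b ≠ 1 → b - a ≠ 1 →
      RR (fun i => p (v i)) (fun i => x (v i)) a b ∨
        RR (fun i => p (v i)) (fun i => x (v i)) b a := by
    intro a b h1 h2 h3
    obtain ⟨hne', hle1, hle2⟩ := (hiff a b).mpr ⟨h1, h2, h3⟩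
    exact RR_or hp' (lt_of_le_of_ne hle1 (hnoties _ _ hne'))
      (lt_of_le_of_ne hle2 (hnoties _ _ hne'.symm))
  have hnon1 : ∀ u : ZMod k, ¬ RR (fun i => p (v i)) (fun i => x (v i)) u (u + 1) := by
    intro u h
    have hne' : u ≠ u + 1 := fun e => hone ((left_eq_add).mp e)
    have := (hiff u (u + 1)).mp ⟨hvne hne', h.2.2.1.le, h.2.2.2.le⟩
    exact this.2.2 (by ring)
  have hnon2 : ∀ u : ZMod k, ¬ RR (fun i => p (v i)) (fun i => x (v i)) (u + 1) u := by
    intro u h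
    have hne' : u + 1 ≠ u := fun e => hone ((left_eq_add).mp e.symm)
    have := (hiff (u + 1) u).mp ⟨hvne hne', h.2.2.1.le, h.2.2.2.le⟩
    exact this.2.1 (by ring)
  have hedge : ∀ (a : ZMod k) (j : ℕ), 2 ≤ j → j ≤ k - 2 →
      RR (fun i => p (v i)) (fun i => x (v i)) a (a + (j : ZMod k)) ∨
        RR (fun i => p (v i)) (fun i => x (v i)) (a + (j : ZMod k)) a := by
    intro a j hj2 hjk
    apply hmut
    · intro e
      have h0 : ((j : ZMod k)) = ((0 : ℕ) : ZMod k) := by simpa using (left_eq_add).mp e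
      have := hinj j 0 (by omega) (by omega) h0
      omega
    · intro e
      have h3 : (-(j : ZMod k)) = 1 := by linear_combination e
      have h4 : ((k - 1 : ℕ) : ZMod k) + 1 = 0 := by
        have h5 : ((k - 1 : ℕ) : ZMod k) + ((1 : ℕ) : ZMod k) = ((k : ℕ) : ZMod k) := by
          rw [← Nat.cast_add]; congr 1; omega
        simpa [ZMod.natCast_self] using h5
      have h6 : ((j : ZMod k)) = ((k - 1 : ℕ) : ZMod k) := by linear_combination - h3 - h4
      have := hinj j (k - 1) (by omega) (by omega) h6
      omega
    · intro e
      have h3 : ((j : ZMod k)) = ((1 : ℕ) : ZMod k) := by push_cast; linear_combination e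
      have := hinj j 1 (by omega) (by omega) h3
      omega
  -- the arc lemma : all edges at a vertex point the same way
  have harc : ∀ (a : ZMod k) (j : ℕ) (hj2 : 2 ≤ j), j ≤ k - 2 →
      ((x (v a) 0 < x (v (a + (j : ZMod k))) 0) ↔
        (x (v a) 0 < x (v (a + ((2 : ℕ) : ZMod k))) 0)) := by
    intro a j hj2
    induction j, hj2 using Nat.le_induction with
    | base => intro _; exact Iff.rfl
    | succ j hj2 ih =>
      intro hjk1
      have hjk : j ≤ k - 2 := by omega
      have ihe := ih hjk
      have hcast : a + ((j + 1 : ℕ) : ZMod k) = (a + ((j : ℕ) : ZMod k)) + 1 := by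
        push_cast; ring
      rw [hcast, ← ihe]
      rcases hedge a j hj2 hjk with e1 | e1
      · rcases hedge a (j + 1) (by omega) hjk1 with e2 | e2
        · rw [hcast] at e2
          exact iff_of_true e2.1 e1.1
        · rw [hcast] at e2
          exact absurd (RR_trans hp' e2 e1) (hnon2 (a + ((j : ℕ) : ZMod k)))
      · rcases hedge a (j + 1) (by omega) hjk1 with e2 | e2
        · rw [hcast] at e2
          exact absurd (RR_trans hp' e1 e2) (hnon1 (a + ((j : ℕ) : ZMod k)))
        · rw [hcast] at e2
          exact iff_of_false (asymm e2.1) (asymm e1.1)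
  -- coloring: adjacent (in the antihole) vertices get opposite colors
  have hcol : ∀ (a : ZMod k) (j : ℕ), 2 ≤ j → j ≤ k - 2 →
      ((x (v a) 0 < x (v (a + ((2 : ℕ) : ZMod k))) 0) ↔
        ¬ (x (v (a + (j : ZMod k))) 0 <
            x (v ((a + (j : ZMod k)) + ((2 : ℕ) : ZMod k))) 0)) := by
    intro a j hj2 hjk
    rw [← harc a j hj2 hjk, ← harc (a + (j : ZMod k)) (k - j) (by omega) (by omega)]
    have hback : (a + (j : ZMod k)) + ((k - j : ℕ) : ZMod k) = a := by
      have h5 : ((k - j : ℕ) : ZMod k) + ((j : ℕ) : ZMod k) = ((k : ℕ) : ZMod k) := by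
        rw [← Nat.cast_add]; congr 1; omega
      rw [ZMod.natCast_self] at h5
      linear_combination h5
    rw [hback]
    rcases hedge a j hj2 hjk with e | e
    · exact iff_of_true e.1 (not_lt.mpr e.1.le)
    · exact iff_of_false (asymm e.1) (not_not_intro e.1)
  have h2k : (2 : ℕ) ≤ k - 2 := by omega
  rcases Nat.even_or_odd k with hev | hodd
  · -- k even, k ≥ 6 : triangle 0, 2, 4
    have hk6 : 6 ≤ k := by rcases hev with ⟨m, hm⟩; omega
    have h1 := hcol 0 2 le_rfl h2k
    have h2 := hcol (0 + ((2 : ℕ) : ZMod k)) 2 le_rfl h2k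
    have h3 := hcol 0 4 (by omega) (by omega)
    have hc1 : (0 : ZMod k) + ((2 : ℕ) : ZMod k) + ((2 : ℕ) : ZMod k)
        = (0 : ZMod k) + ((4 : ℕ) : ZMod k) := by push_cast; ring
    rw [hc1] at h1 h2
    tauto
  · -- k odd : walk by steps of 2 around the cycle
    refine parity_contra
      (fun n => x (v ((2 * n : ℕ) : ZMod k)) 0 <
        x (v (((2 * n : ℕ) : ZMod k) + ((2 : ℕ) : ZMod k))) 0) ?_ hodd ?_
    · intro n
      have hc : ((2 * (n + 1) : ℕ) : ZMod k) = ((2 * n : ℕ) : ZMod k) + ((2 : ℕ) : ZMod k) := by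
        push_cast; ring
      simp only [hc]
      exact iff_not_comm.mp (hcol ((2 * n : ℕ) : ZMod k) 2 le_rfl h2k)
    · have hc2 : ((2 * k : ℕ) : ZMod k) = ((2 * 0 : ℕ) : ZMod k) := by
        push_cast [ZMod.natCast_self]; ring
      simp only [hc2]
end

section
/- Let (p_i, x_i), i ∈ ι, be a non-degenerate two-commodity consumer data-set on a finite index set. Then the auxiliary undirected graph G_⪰ is perfect: for every subset S ⊆ ι, the chromatic number of the subgraph of G_⪰ induced on S equals the clique number (the maximum size of a clique) of that induced subgraph. -/
/-- The auxiliary undirected graph `G_⪰` of a two-commodity consumer data-set: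
distinct `i, j` are adjacent iff `x i ⪰ x j` and `x j ⪰ x i`. -/
def auxGraph {ι : Type*} (p x : ι → Fin 2 → ℝ) : SimpleGraph ι where
  Adj i j := i ≠ j ∧ dot2 (p i) (x j) ≤ dot2 (p i) (x i) ∧
    dot2 (p j) (x i) ≤ dot2 (p j) (x j)
  symm := by
    constructor
    intro i j h
    exact ⟨h.1.symm, h.2.2, h.2.1⟩
  loopless := by
    constructor
    intro i h
    exact h.1 rfl

lemma dot2_expand (p y : Fin 2 → ℝ) : dot2 p y = p 0 * y 0 + p 1 * y 1 := by
  simp [dot2, Fin.sum_univ_two]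

/-- The core analytic inequality. -/
lemma key_ineq (P0 P1 Q0 Q1 a0 a1 b0 b1 c0 c1 : ℝ)
    (hP0 : 0 ≤ P0) (hP1 : 0 ≤ P1) (hQ0 : 0 ≤ Q0) (hQ1 : 0 ≤ Q1)
    (hab0 : a0 < b0) (hbc0 : b0 < c0) (hba1 : b1 < a1) (hcb1 : c1 < b1)
    (h1 : P0*b0 + P1*b1 < P0*a0 + P1*a1)
    (h2 : Q0*a0 + Q1*a1 < Q0*b0 + Q1*b1)
    (h3 : Q0*c0 + Q1*c1 < Q0*b0 + Q1*b1) :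
    P0*c0 + P1*c1 < P0*a0 + P1*a1 := by
  have hQ1pos : 0 < Q1 := by nlinarith [mul_nonneg hQ0 (le_of_lt (sub_pos.mpr hbc0))]
  have hQ0pos : 0 < Q0 := by nlinarith [mul_nonneg hQ1 (le_of_lt (sub_pos.mpr hba1))]
  have hdet : P0*Q1 < P1*Q0 := by
    nlinarith [mul_lt_mul_of_pos_left h1 hQ0pos,
      mul_le_mul_of_nonneg_left (le_of_lt h2) hP0, mul_pos hQ0pos hQ1pos]
  have hstep : P0*(c0-b0) + P1*(c1-b1) < 0 := by
    have h4 : P1*(Q0*c0 + Q1*c1) < P1*(Q0*b0 + Q1*b1) ∨ P1 = 0 := by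
      rcases lt_or_eq_of_le hP1 with h | h
      · exact Or.inl (by nlinarith)
      · exact Or.inr h.symm
    rcases h4 with h4 | h4
    · have : P0*Q1 * (c0 - b0) ≤ P1*Q0 * (c0-b0) :=
        mul_le_mul_of_nonneg_right (le_of_lt hdet) (by linarith)
      nlinarith
    · nlinarith
  linarith

section Analytic

variable {ι : Type*} (p x : ι → Fin 2 → ℝ)

/-- On an edge, the revealed-preference inequalities are strict. -/
lemma adj_strict (hnoties : ∀ i j, i ≠ j → dot2 (p i) (x j) ≠ dot2 (p i) (x i))
    {i j : ι} (h : (auxGraph p x).Adj i j) :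
    dot2 (p i) (x j) < dot2 (p i) (x i) ∧ dot2 (p j) (x i) < dot2 (p j) (x j) :=
  ⟨lt_of_le_of_ne h.2.1 (hnoties i j h.1), lt_of_le_of_ne h.2.2 (hnoties j i h.1.symm)⟩

/-- On an edge, the two bundles are incomparable: first coordinates differ. -/
lemma adj_fst_ne (hp : ∀ i k, 0 ≤ p i k)
    (hdistinct : ∀ i j, i ≠ j → x i ≠ x j)
    (hnoties : ∀ i j, i ≠ j → dot2 (p i) (x j) ≠ dot2 (p i) (x i))
    {i j : ι} (h : (auxGraph p x).Adj i j) : x i 0 ≠ x j 0 := by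
  intro h0
  obtain ⟨hs1, hs2⟩ := adj_strict p x hnoties h
  rw [dot2_expand, dot2_expand] at hs1 hs2
  have hne1 : x i 1 ≠ x j 1 := by
    intro h1
    exact hdistinct i j h.1 (funext fun k => by fin_cases k <;> assumption)
  rcases lt_or_gt_of_ne hne1 with h1 | h1
  · nlinarith [hp i 0, hp i 1]
  · nlinarith [hp j 0, hp j 1]

/-- On an edge, second coordinates are reversed relative to first coordinates. -/
lemma adj_snd_lt (hp : ∀ i k, 0 ≤ p i k)
    (hnoties : ∀ i j, i ≠ j → dot2 (p i) (x j) ≠ dot2 (p i) (x i))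
    {i j : ι} (h : (auxGraph p x).Adj i j) (h0 : x i 0 < x j 0) : x j 1 < x i 1 := by
  by_contra hle
  push_neg at hle
  obtain ⟨hs1, _⟩ := adj_strict p x hnoties h
  rw [dot2_expand, dot2_expand] at hs1
  nlinarith [hp i 0, hp i 1]

/-- Transitivity of the orientation of edges by the first coordinate. -/
lemma adj_trans (hp : ∀ i k, 0 ≤ p i k)
    (hnoties : ∀ i j, i ≠ j → dot2 (p i) (x j) ≠ dot2 (p i) (x i))
    {i j k : ι} (hij : (auxGraph p x).Adj i j) (hjk : (auxGraph p x).Adj j k)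
    (h1 : x i 0 < x j 0) (h2 : x j 0 < x k 0) : (auxGraph p x).Adj i k := by
  have hik : i ≠ k := fun h => by rw [h] at h1; exact absurd (h1.trans h2) (lt_irrefl _)
  have hb1 : x j 1 < x i 1 := adj_snd_lt p x hp hnoties hij h1
  have hc1 : x k 1 < x j 1 := adj_snd_lt p x hp hnoties hjk h2
  obtain ⟨hij1, hij2⟩ := adj_strict p x hnoties hij
  obtain ⟨hjk1, hjk2⟩ := adj_strict p x hnoties hjk
  rw [dot2_expand, dot2_expand] at hij1 hij2 hjk1 hjk2
  refine ⟨hik, ?_, ?_⟩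
  · rw [dot2_expand, dot2_expand]
    exact le_of_lt (key_ineq (p i 0) (p i 1) (p j 0) (p j 1)
      (x i 0) (x i 1) (x j 0) (x j 1) (x k 0) (x k 1)
      (hp i 0) (hp i 1) (hp j 0) (hp j 1) h1 h2 hb1 hc1 hij1 hij2 hjk1)
  · rw [dot2_expand, dot2_expand]
    have := key_ineq (p k 1) (p k 0) (p j 1) (p j 0)
      (x k 1) (x k 0) (x j 1) (x j 0) (x i 1) (x i 0)
      (hp k 1) (hp k 0) (hp j 1) (hp j 0) hc1 hb1 h2 h1
      (by linarith) (by linarith) (by linarith)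
    linarith

end Analytic

/-- Mirsky-type result: a finite comparability graph has chromatic number
equal to its clique number. -/
lemma comparability_chromatic {V : Type*} [Finite V] (G : SimpleGraph V)
    (r : V → V → Prop) (hirr : ∀ a, ¬ r a a) (htrans : ∀ {a b c}, r a b → r b c → r a c)
    (hadj : ∀ a b, G.Adj a b ↔ r a b ∨ r b a) :
    G.chromaticNumber = (G.cliqueNum : ℕ∞) := by
  classical
  letI : Fintype V := Fintype.ofFinite V
  letI P : PartialOrder V :=
  { le := fun a b => a = b ∨ r a b
    lt := fun a b => r a b
    le_refl := fun a => Or.inl rfl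
    le_trans := by
      rintro a b c (rfl | hab) (rfl | hbc)
      · exact Or.inl rfl
      · exact Or.inr hbc
      · exact Or.inr hab
      · exact Or.inr (htrans hab hbc)
    lt_iff_le_not_ge := by
      intro a b
      constructor
      · intro hab
        refine ⟨Or.inr hab, ?_⟩
        rintro (h | hba)
        · exact hirr _ (h ▸ hab)
        · exact hirr _ (htrans hab hba)
      · rintro ⟨(rfl | hab), hn⟩
        · exact absurd (Or.inl rfl) hn
        · exact hab
    le_antisymm := by
      rintro a b (rfl | hab) (h | hba)
      · rfl
      · rfl
      · exact h.symm
      · exact absurd (htrans hab hba) (hirr a) }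
  have hltr : ∀ a b : V, a < b ↔ r a b := fun a b => Iff.rfl
  -- every `<`-chain forms a clique
  have hchain_clique : ∀ q : LTSeries V, (q.length + 1 : ℕ) ≤ G.cliqueNum := by
    intro q
    have hinj : Function.Injective q := q.strictMono.injective
    have hclique : G.IsClique (Finset.image q Finset.univ : Finset V) := by
      intro a ha b hb hne
      simp only [Finset.coe_image, Set.mem_image] at ha hb
      obtain ⟨ia, -, rfl⟩ := ha
      obtain ⟨ib, -, rfl⟩ := hb
      have hne' : ia ≠ ib := fun h => hne (by rw [h])
      rcases lt_or_gt_of_ne hne' with h | h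
      · exact (hadj _ _).mpr (Or.inl ((hltr _ _).mp (q.strictMono h)))
      · exact (hadj _ _).mpr (Or.inr ((hltr _ _).mp (q.strictMono h)))
    have hcard : (Finset.image q Finset.univ : Finset V).card = q.length + 1 := by
      rw [Finset.card_image_of_injective _ hinj, Finset.card_univ, Fintype.card_fin]
    calc (q.length + 1 : ℕ) = (Finset.image q Finset.univ : Finset V).card := hcard.symm
      _ ≤ G.cliqueNum := SimpleGraph.IsClique.card_le_cliqueNum (tc := hclique)
  -- heights are bounded
  have hbd : ∀ v : V, Order.height v ≤ ((G.cliqueNum - 1 : ℕ) : ℕ∞) := by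
    intro v
    apply Order.height_le
    intro q hq
    have h := hchain_clique q
    have h2 : q.length ≤ G.cliqueNum - 1 := by omega
    exact_mod_cast h2
  have hfin : ∀ v : V, Order.height v < ⊤ :=
    fun v => lt_of_le_of_lt (hbd v) (WithTop.coe_lt_top _)
  -- the height coloring
  refine le_antisymm ?_ ?_
  · have hcol : G.Colorable G.cliqueNum := by
      rw [SimpleGraph.colorable_iff_exists_bdd_nat_coloring]
      refine ⟨SimpleGraph.Coloring.mk (fun v => (Order.height v).toNat) ?_, ?_⟩
      · intro a b hab
        have hne : ∀ u w : V, u < w → (Order.height u).toNat ≠ (Order.height w).toNat := by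
          intro u w huw
          have hlt := Order.height_strictMono huw (hfin u)
          have hu := (hfin u).ne
          have hw := (hfin w).ne
          lift Order.height u to ℕ using hu with nu
          lift Order.height w to ℕ using hw with nw
          simp only [ENat.toNat_coe]
          exact_mod_cast (Nat.cast_lt.mp hlt).ne
        rcases (hadj a b).mp hab with h | h
        · exact hne a b ((hltr a b).mpr h)
        · exact (hne b a ((hltr b a).mpr h)).symm
      · intro v
        show (Order.height v).toNat < G.cliqueNum
        have h1 : (1 : ℕ) ≤ G.cliqueNum := by
          have hclique : G.IsClique (({v} : Finset V) : Set V) := by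
            intro a ha b hb hne
            simp only [Finset.coe_singleton, Set.mem_singleton_iff] at ha hb
            exact absurd (ha.trans hb.symm) hne
          have := SimpleGraph.IsClique.card_le_cliqueNum (tc := hclique)
          simpa using this
        have := hbd v
        lift Order.height v to ℕ using (hfin v).ne with nv
        simp only [ENat.toNat_coe]
        have : nv ≤ G.cliqueNum - 1 := by exact_mod_cast this
        omega
    exact hcol.chromaticNumber_le
  · obtain ⟨s, hs⟩ := G.exists_isNClique_cliqueNum
    have := SimpleGraph.IsClique.card_le_chromaticNumber hs.isClique
    rwa [hs.card_eq] at this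

/-- **Perfection of the auxiliary graph.** For a non-degenerate two-commodity consumer
data-set on a finite index set, the auxiliary undirected graph `G_⪰` is perfect: every
induced subgraph has chromatic number equal to its clique number. -/
theorem stmt12 {ι : Type*} [Fintype ι] (p x : ι → Fin 2 → ℝ)
    (hp : ∀ i k, 0 ≤ p i k) (hx : ∀ i k, 0 ≤ x i k)
    (hdistinct : ∀ i j, i ≠ j → x i ≠ x j)
    (hnoties : ∀ i j, i ≠ j → dot2 (p i) (x j) ≠ dot2 (p i) (x i)) :
    ∀ S : Set ι,
      ((auxGraph p x).induce S).chromaticNumber =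
        (((auxGraph p x).induce S).cliqueNum : ℕ∞) := by
  intro S
  apply comparability_chromatic _ (fun a b : S => (auxGraph p x).Adj a.1 b.1 ∧ x a.1 0 < x b.1 0)
  · rintro a ⟨-, hlt⟩
    exact lt_irrefl _ hlt
  · rintro a b c ⟨hab, h1⟩ ⟨hbc, h2⟩
    exact ⟨adj_trans p x hp hnoties hab hbc h1 h2, h1.trans h2⟩
  · intro a b
    constructor
    · intro h
      have h' : (auxGraph p x).Adj a.1 b.1 := h
      rcases lt_or_gt_of_ne (adj_fst_ne p x hp hdistinct hnoties h') with hlt | hlt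
      · exact Or.inl ⟨h', hlt⟩
      · exact Or.inr ⟨h'.symm, hlt⟩
    · rintro (⟨h, -⟩ | ⟨h, -⟩)
      · exact h
      · exact h.symm
end

section
/- Every oriented-disc graph is the revealed preference digraph of a three-commodity consumer data-set. Precisely: let ι be a finite index set, let z_i ∈ ℝ² be pairwise distinct points and let B_i ⊆ ℝ² be closed discs with centre c_i ∈ ℝ² and radius r_i = dist(z_i, c_i) > 0, so that z_i lies on the boundary of B_i. Then there exist price vectors p_i ∈ ℝ_{≥0}³ and bundles y_i ∈ ℝ_{≥0}³ such that for all i ≠ j: dist(z_j, c_i) ≤ r_i (i.e. z_j ∈ B_i) if and only if p_i·y_j ≤ p_i·y_i. -/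
/-- Dot product in `ℝ³`. -/
def dot3 (p x : Fin 3 → ℝ) : ℝ := ∑ k, p k * x k

lemma dist_sq_two (x y : EuclideanSpace ℝ (Fin 2)) :
    dist x y ^ 2 = (x 0 - y 0) ^ 2 + (x 1 - y 1) ^ 2 := by
  rw [EuclideanSpace.dist_eq, Real.sq_sqrt (by positivity)]
  simp [Fin.sum_univ_two, Real.dist_eq, sq_abs]

/-- **Oriented-disc graphs are 3-commodity preference graphs.** Given finitely many
pairwise-distinct points `z i ∈ ℝ²` and closed discs with centres `c i` and radii
`dist (z i) (c i) > 0` (so `z i` is on the boundary of its disc), there is a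
three-commodity consumer data-set `(p i, y i)` whose revealed preference digraph is the
oriented-disc graph: for `i ≠ j`, `z j` lies in disc `i` iff `p i · y j ≤ p i · y i`. -/
theorem stmt13 {ι : Type*} [Fintype ι]
    (z c : ι → EuclideanSpace ℝ (Fin 2))
    (hr : ∀ i, 0 < dist (z i) (c i))
    (hdistinct : ∀ i j, i ≠ j → z i ≠ z j) :
    ∃ p y : ι → Fin 3 → ℝ,
      (∀ i k, 0 ≤ p i k) ∧ (∀ i k, 0 ≤ y i k) ∧
      (∀ i j, i ≠ j →
        (dist (z j) (c i) ≤ dist (z i) (c i) ↔ dot3 (p i) (y j) ≤ dot3 (p i) (y i))) := by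
  obtain ⟨A, hA⟩ := Finite.exists_le (fun ik : ι × Fin 2 => 2 * c ik.1 ik.2)
  obtain ⟨T, hT⟩ := Finite.exists_le (fun jk : ι × Fin 2 => -(z jk.1 jk.2))
  set t : ℝ := max T 0 with ht
  obtain ⟨C, hC⟩ :=
    Finite.exists_le (fun j : ι => A * (z j 0 + z j 1) - (z j 0 ^ 2 + z j 1 ^ 2))
  set D : ℝ := max C 0 with hD
  refine ⟨fun i => ![A - 2 * c i 0, A - 2 * c i 1, 1],
         fun j => ![z j 0 + t, z j 1 + t,
                    z j 0 ^ 2 + z j 1 ^ 2 - A * (z j 0 + z j 1) + D], ?_, ?_, ?_⟩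
  · intro i k
    fin_cases k
    · simpa using sub_nonneg.mpr (hA (i, 0))
    · simpa using sub_nonneg.mpr (hA (i, 1))
    · norm_num
  · intro j k
    fin_cases k
    · have h1 := hT (j, 0)
      have h2 : T ≤ t := le_max_left _ _
      simp only [Matrix.cons_val_zero, Fin.mk_zero]
      simp
      linarith
    · have h1 := hT (j, 1)
      have h2 : T ≤ t := le_max_left _ _
      simp
      linarith
    · have h1 := hC j
      have h2 : C ≤ D := le_max_left _ _
      simp
      linarith
  · intro i j hij
    have key : ∀ a : ι,
        dot3 ![A - 2 * c i 0, A - 2 * c i 1, 1]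
          ![z a 0 + t, z a 1 + t,
            z a 0 ^ 2 + z a 1 ^ 2 - A * (z a 0 + z a 1) + D]
        = dist (z a) (c i) ^ 2
          + (2 * A * t - 2 * t * (c i 0 + c i 1) + D - (c i 0 ^ 2 + c i 1 ^ 2)) := by
      intro a
      rw [dist_sq_two]
      simp only [dot3, Fin.sum_univ_three, Matrix.cons_val_zero, Matrix.cons_val_one,
        Matrix.head_cons, Matrix.cons_val_two, Matrix.tail_cons]
      ring
    rw [key, key,
      ← pow_le_pow_iff_left₀ dist_nonneg dist_nonneg (two_ne_zero)]
    constructor <;> intro h <;> linarith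
end

section
/- Let p_a, p_b, p_c ∈ ℝ_{≥0}² be nonzero price vectors and a, b, c, d ∈ ℝ_{≥0}² pairwise distinct bundles, forming consecutive vertices of a chordless directed cycle of a non-degenerate two-commodity data-set; explicitly assume: p_a·b < p_a·a, p_b·c < p_b·b, p_c·d < p_c·c (the arcs a→b→c→d), together with p_b·a > p_b·b, p_c·b > p_c·c (no reverse arcs), p_a·c > p_a·a, p_c·a > p_c·c, p_a·d > p_a·a, p_b·d > p_b·b (no chords from a to c, c to a, a to d, or b to d). If furthermore b ∈ a^↘ (b_1 ≥ a_1 and b_2 ≤ a_2) and the line ℓ_a through a perpendicular to p_a is steeper than the line ℓ_b through b perpendicular to p_b, i.e. (p_a)_1·(p_b)_2 > (p_b)_1·(p_a)_2, then c ∈ b^↘ and ℓ_b is steeper than ℓ_c, i.e. (p_b)_1·(p_c)_2 > (p_c)_1·(p_b)_2. -/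
/-- If `p·u > 0`, `q·u < 0` and the line perpendicular to `p` is steeper than
that perpendicular to `q`, then `u` points strictly south-east. -/
lemma se_lemma (p0 p1 q0 q1 u0 u1 : ℝ) (hp0 : 0 ≤ p0) (hp1 : 0 ≤ p1)
    (hq0 : 0 ≤ q0) (hq1 : 0 ≤ q1)
    (hpu : 0 < p0 * u0 + p1 * u1) (hqu : q0 * u0 + q1 * u1 < 0)
    (hx : q0 * p1 < p0 * q1) : 0 < u0 ∧ u1 < 0 := by
  have hq1' : 0 < q1 := by nlinarith
  have hp0' : 0 < p0 := by nlinarith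
  constructor
  · nlinarith [mul_pos hq1' hpu, mul_nonneg hp1 (by linarith : 0 ≤ -(q0 * u0 + q1 * u1))]
  · nlinarith [mul_nonneg hq0 hpu.le, mul_pos hp0' (by linarith : 0 < -(q0 * u0 + q1 * u1))]

/-- Mirror version: if the line perpendicular to `q` is strictly steeper,
`u` points strictly north-west. -/
lemma nw_lemma (p0 p1 q0 q1 u0 u1 : ℝ) (hp0 : 0 ≤ p0) (hp1 : 0 ≤ p1)
    (hq0 : 0 ≤ q0) (hq1 : 0 ≤ q1)
    (hpu : 0 < p0 * u0 + p1 * u1) (hqu : q0 * u0 + q1 * u1 < 0)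
    (hx : p0 * q1 < q0 * p1) : u0 < 0 ∧ 0 < u1 := by
  obtain ⟨h1, h2⟩ := se_lemma p1 p0 q1 q0 u1 u0 hp1 hp0 hq1 hq0
    (by linarith) (by linarith) (by linarith)
  exact ⟨h2, h1⟩

/-- Two nonnegative vectors separated by `u` cannot be parallel. -/
lemma cross_ne (p0 p1 q0 q1 u0 u1 : ℝ) (hp0 : 0 ≤ p0) (hp1 : 0 ≤ p1)
    (hq0 : 0 ≤ q0) (hq1 : 0 ≤ q1)
    (hpu : 0 < p0 * u0 + p1 * u1) (hqu : q0 * u0 + q1 * u1 < 0) :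
    q0 * p1 ≠ p0 * q1 := by
  intro hx
  rcases eq_or_lt_of_le hp0 with h | h
  · -- p0 = 0
    rw [← h, zero_mul] at hpu hx
    have hp1u : 0 < p1 * u1 := by linarith
    have hp1' : 0 < p1 := by
      rcases hp1.lt_or_eq with h' | h'
      · exact h'
      · rw [← h', zero_mul] at hp1u; linarith
    have hu1 : 0 < u1 := by nlinarith
    rcases mul_eq_zero.mp hx with h'' | h''
    · rw [h'', zero_mul] at hqu
      nlinarith [mul_nonneg hq1 hu1.le]
    · linarith
  · have key : q0 * (p0 * u0 + p1 * u1) = p0 * (q0 * u0 + q1 * u1) := by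
      linear_combination u1 * hx
    nlinarith [mul_nonneg hq0 hpu.le, mul_pos h (by linarith : 0 < -(q0 * u0 + q1 * u1))]

set_option maxHeartbeats 1000000 in
/-- **Induction step of Rose's lemma.** Let `a, b, c, d` be consecutive vertices of a
chordless directed cycle of a non-degenerate two-commodity data-set (arcs `a→b→c→d`,
no reverse arcs `b→a`, `c→b`, and no chords `a→c`, `c→a`, `a→d`, `b→d`). If `b` lies
south-east of `a` and the budget line `ℓ_a` is steeper than `ℓ_b`, then `c` lies
south-east of `b` and `ℓ_b` is steeper than `ℓ_c`. -/
theorem stmt14 (pa pb pc : Fin 2 → ℝ) (a b c d : Fin 2 → ℝ)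
    (hpa : ∀ k, 0 ≤ pa k) (hpb : ∀ k, 0 ≤ pb k) (hpc : ∀ k, 0 ≤ pc k)
    (hpa0 : pa ≠ 0) (hpb0 : pb ≠ 0) (hpc0 : pc ≠ 0)
    (ha : ∀ k, 0 ≤ a k) (hb : ∀ k, 0 ≤ b k) (hc : ∀ k, 0 ≤ c k) (hd : ∀ k, 0 ≤ d k)
    (hab : a ≠ b) (hac : a ≠ c) (had : a ≠ d) (hbc : b ≠ c) (hbd : b ≠ d) (hcd : c ≠ d)
    (arc_ab : dot2 pa b < dot2 pa a)
    (arc_bc : dot2 pb c < dot2 pb b)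
    (arc_cd : dot2 pc d < dot2 pc c)
    (no_ba : dot2 pb a > dot2 pb b)
    (no_cb : dot2 pc b > dot2 pc c)
    (no_ac : dot2 pa c > dot2 pa a)
    (no_ca : dot2 pc a > dot2 pc c)
    (no_ad : dot2 pa d > dot2 pa a)
    (no_bd : dot2 pb d > dot2 pb b)
    (hSE : b 0 ≥ a 0 ∧ b 1 ≤ a 1)
    (hsteep : pa 0 * pb 1 > pb 0 * pa 1) :
    (c 0 ≥ b 0 ∧ c 1 ≤ b 1) ∧ pb 0 * pc 1 > pc 0 * pb 1 := by
  simp only [dot2, Fin.sum_univ_two, gt_iff_lt] at arc_ab arc_bc arc_cd no_ba no_cb no_ac no_ca no_ad no_bd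
  have hpa1 := hpa 1; have hpb0' := hpb 0; have hpa0' := hpa 0; have hpb1' := hpb 1
  have hpc0' := hpc 0; have hpc1' := hpc 1
  have hpa0p : 0 < pa 0 := by nlinarith [mul_nonneg hpb0' hpa1]
  have hpb1p : 0 < pb 1 := by nlinarith [mul_nonneg hpb0' hpa1]
  -- c is strictly south-east of b
  obtain ⟨hcb0, hcb1⟩ := se_lemma (pa 0) (pa 1) (pb 0) (pb 1) (c 0 - b 0) (c 1 - b 1)
    hpa0' hpa1 hpb0' hpb1' (by ring_nf; linarith) (by ring_nf; linarith) (by linarith)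
  refine ⟨⟨by linarith, by linarith⟩, ?_⟩
  by_contra hcon
  push_neg at hcon
  -- cross(pb,pc) < 0 (strict), using d - c
  have hbc_ne : pc 0 * pb 1 ≠ pb 0 * pc 1 :=
    cross_ne (pb 0) (pb 1) (pc 0) (pc 1) (d 0 - c 0) (d 1 - c 1)
      hpb0' hpb1' hpc0' hpc1' (by ring_nf; linarith) (by ring_nf; linarith)
  have hCbc : pb 0 * pc 1 < pc 0 * pb 1 := lt_of_le_of_ne hcon (fun h => hbc_ne h.symm)
  -- c is strictly south-east of a
  obtain ⟨hca0, hca1⟩ := se_lemma (pa 0) (pa 1) (pb 0) (pb 1) (c 0 - a 0) (c 1 - a 1)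
    hpa0' hpa1 hpb0' hpb1' (by ring_nf; linarith) (by ring_nf; linarith) (by linarith)
  -- cross(pa,pc) > 0
  have hCac : pc 0 * pa 1 < pa 0 * pc 1 := by
    rcases lt_trichotomy (pc 0 * pa 1) (pa 0 * pc 1) with h | h | h
    · exact h
    · exact absurd h (cross_ne (pa 0) (pa 1) (pc 0) (pc 1) (c 0 - a 0) (c 1 - a 1)
        hpa0' hpa1 hpc0' hpc1' (by ring_nf; linarith) (by ring_nf; linarith))
    · obtain ⟨h1, _⟩ := nw_lemma (pa 0) (pa 1) (pc 0) (pc 1) (c 0 - a 0) (c 1 - a 1)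
        hpa0' hpa1 hpc0' hpc1' (by ring_nf; linarith) (by ring_nf; linarith) (by linarith)
      linarith
  have hpc1p : 0 < pc 1 := by nlinarith [mul_nonneg hpc0' hpa1]
  -- intersection abscissae of ℓ_b ∩ ℓ_c and ℓ_a ∩ ℓ_c
  set Cbc : ℝ := pb 0 * pc 1 - pc 0 * pb 1 with hCbcdef
  set Cac : ℝ := pa 0 * pc 1 - pc 0 * pa 1 with hCacdef
  have hCbcneg : Cbc < 0 := by rw [hCbcdef]; linarith
  have hCacpos : 0 < Cac := by rw [hCacdef]; linarith
  set r0 : ℝ := ((pb 0 * b 0 + pb 1 * b 1) * pc 1 - (pc 0 * c 0 + pc 1 * c 1) * pb 1) / Cbc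
  set s0 : ℝ := ((pa 0 * a 0 + pa 1 * a 1) * pc 1 - (pc 0 * c 0 + pc 1 * c 1) * pa 1) / Cac
  have h_rb : r0 < b 0 := by
    rw [div_lt_iff_of_neg hCbcneg]
    nlinarith [mul_pos hpb1p (by linarith : (0:ℝ) < (pc 0 * b 0 + pc 1 * b 1) - (pc 0 * c 0 + pc 1 * c 1))]
  have h_bs : b 0 < s0 := by
    rw [lt_div_iff₀ hCacpos]
    nlinarith [mul_pos hpc1p (by linarith : (0:ℝ) < (pa 0 * a 0 + pa 1 * a 1) - (pa 0 * b 0 + pa 1 * b 1)),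
      mul_nonneg hpa1 (by linarith : (0:ℝ) ≤ (pc 0 * b 0 + pc 1 * b 1) - (pc 0 * c 0 + pc 1 * c 1))]
  have h_sd : s0 < d 0 := by
    rw [div_lt_iff₀ hCacpos]
    nlinarith [mul_pos hpc1p (by linarith : (0:ℝ) < (pa 0 * d 0 + pa 1 * d 1) - (pa 0 * a 0 + pa 1 * a 1)),
      mul_nonneg hpa1 (by linarith : (0:ℝ) ≤ (pc 0 * c 0 + pc 1 * c 1) - (pc 0 * d 0 + pc 1 * d 1))]
  have h_dr : d 0 < r0 := by
    rw [lt_div_iff_of_neg hCbcneg]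
    nlinarith [mul_pos hpc1p (by linarith : (0:ℝ) < (pb 0 * d 0 + pb 1 * d 1) - (pb 0 * b 0 + pb 1 * b 1)),
      mul_pos hpb1p (by linarith : (0:ℝ) < (pc 0 * c 0 + pc 1 * c 1) - (pc 0 * d 0 + pc 1 * d 1))]
  linarith
end
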